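/- arXiv:2301.05529 — 8 statements merged into one kernel-verified Lean document; each statement's English description precedes it below -/
import Mathlib

section
/- Let A⁽¹⁾,…,A⁽ᵐ⁾ ∈ ℂⁿˣⁿ be matrices all of whose eigenvalues have negative real part, and suppose they admit a common invariant maximal flag: there is an orthonormal basis (v₁,…,vₙ) of ℂⁿ such that A⁽ⁱ⁾·span{v₁,…,vⱼ} ⊆ span{v₁,…,vⱼ} for all i ∈ {1,…,m} and j ∈ {1,…,n}. Write λⱼ⁽ⁱ⁾ = ⟨vⱼ, A⁽ⁱ⁾vⱼ⟩ (the diagonal entries of the triangularization of A⁽ⁱ⁾ in this basis, which are its eigenvalues). If positive real numbers ε₁,…,εₙ satisfy, for every j ∈ {2,…,n}, εⱼ > max over i ∈ {1,…,m} and k ∈ {1,…,j−1} of εₖ · ((n−1)²/4) · |⟨vₖ, A⁽ⁱ⁾vⱼ⟩|² / (|Re λⱼ⁽ⁱ⁾| · |Re λₖ⁽ⁱ⁾|), then V(x) = Σ_{j=1}^n εⱼ |⟨vⱼ, x⟩|² is a common Lyapunov function for the switched linear system {ẋ = A⁽ⁱ⁾x}: for every i and every x ∈ ℂⁿ \ {0},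 the derivative of V along the i-th subsystem is negative, i.e. 2 Σ_{j=1}^n εⱼ Re(⟨vⱼ, A⁽ⁱ⁾x⟩ · conj(⟨vⱼ, x⟩)) < 0. -/
open scoped BigOperators ComplexConjugate

/-- Hermitian inner product ⟨v, x⟩ = Σ_l conj(v_l)·x_l on ℂⁿ. -/
noncomputable def herm {n : ℕ} (v x : Fin n → ℂ) : ℂ := ∑ l, conj (v l) * x l

/-- Proposition 3.7 (Zagabe–Mauroy): a common Lyapunov function for a switched
linear system whose matrices are stable and admit a common invariant maximal flag. -/
theorem stmt0 {n m : ℕ} (hn : 1 ≤ n) (hm : 1 ≤ m)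
    (A : Fin m → Matrix (Fin n) (Fin n) ℂ)
    -- all eigenvalues of every A⁽ⁱ⁾ have negative real part
    (hstab : ∀ i : Fin m, ∀ μ ∈ spectrum ℂ (A i), μ.re < 0)
    -- (v₁,…,vₙ) is an orthonormal basis of ℂⁿ
    (v : Fin n → (Fin n → ℂ))
    (hortho : ∀ j k : Fin n, herm (v j) (v k) = if j = k then 1 else 0)
    -- common invariant maximal flag: A⁽ⁱ⁾ vⱼ ∈ span{v₁,…,vⱼ}
    (hflag : ∀ (i : Fin m) (j : Fin n),
      (A i).mulVec (v j) ∈ Submodule.span ℂ {u | ∃ k ≤ j, u = v k})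
    -- λⱼ⁽ⁱ⁾ = ⟨vⱼ, A⁽ⁱ⁾vⱼ⟩
    (lam : Fin m → Fin n → ℂ)
    (hlam : ∀ i j, lam i j = herm (v j) ((A i).mulVec (v j)))
    -- positive weights satisfying the compensation condition
    (ε : Fin n → ℝ) (hεpos : ∀ j, 0 < ε j)
    (hεcond : ∀ (j : Fin n) (i : Fin m) (k : Fin n), k < j →
      ε j > ε k * (((n : ℝ) - 1) ^ 2 / 4) *
        ‖herm (v k) ((A i).mulVec (v j))‖ ^ 2 /
        (|(lam i j).re| * |(lam i k).re|)) :
    -- V(x) = Σ εⱼ |⟨vⱼ,x⟩|² is a common Lyapunov function: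
    ∀ (i : Fin m) (x : Fin n → ℂ), x ≠ 0 →
      2 * ∑ j, ε j * (herm (v j) ((A i).mulVec x) * conj (herm (v j) x)).re < 0 := by
  intro i x hx
  set P : Matrix (Fin n) (Fin n) ℂ := Matrix.of (fun j l => conj (v j l)) with hPdef
  have hherm : ∀ (j : Fin n) (z : Fin n → ℂ), herm (v j) z = P.mulVec z j := by
    intro j z
    simp [herm, Matrix.mulVec, dotProduct, hPdef]
  have hPP : P * P.conjTranspose = 1 := by
    ext j k
    have := hortho j k
    simpa [Matrix.mul_apply, Matrix.conjTranspose_apply, Matrix.one_apply, hPdef, herm]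
      using this
  have hQP : P.conjTranspose * P = 1 := mul_eq_one_comm.mp hPP
  set y : Fin n → ℂ := P.mulVec x with hydef
  have hxy : x = P.conjTranspose.mulVec y := by
    rw [hydef, Matrix.mulVec_mulVec, hQP, Matrix.one_mulVec]
  have hyne : y ≠ 0 := by
    intro h
    apply hx
    rw [hxy, h, Matrix.mulVec_zero]
  set B : Matrix (Fin n) (Fin n) ℂ := P * A i * P.conjTranspose with hBdef
  have hAx : ∀ j, herm (v j) ((A i).mulVec x) = B.mulVec y j := by
    intro j
    rw [hherm]
    have : P.mulVec ((A i).mulVec x) = B.mulVec y := by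
      rw [hydef, Matrix.mulVec_mulVec, Matrix.mulVec_mulVec, hBdef,
        Matrix.mul_assoc (P * A i), hQP, Matrix.mul_one]
    rw [this]
  have hBapply : ∀ j k : Fin n, B j k = herm (v j) ((A i).mulVec (v k)) := by
    intro j k
    rw [hherm]
    have hv : v k = P.conjTranspose.mulVec (Pi.single k 1) := by
      ext l
      simp [Matrix.mulVec, dotProduct, Matrix.conjTranspose_apply, hPdef,
        Pi.single_apply, Finset.sum_ite_eq']
    rw [hv, Matrix.mulVec_mulVec, Matrix.mulVec_mulVec, ← hBdef]
    simp [Matrix.mulVec, dotProduct, Pi.single_apply]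
  have herm_zero_of_span : ∀ j k : Fin n, k < j → herm (v j) ((A i).mulVec (v k)) = 0 := by
    intro j k hk
    have hgen : ∀ u ∈ Submodule.span ℂ {u | ∃ p ≤ k, u = v p}, herm (v j) u = 0 := by
      intro u hu
      induction hu using Submodule.span_induction with
      | mem u hu =>
        obtain ⟨p, hpk, rfl⟩ := hu
        rw [hortho]
        have hne : j ≠ p := fun h => absurd (lt_of_le_of_lt hpk hk) (by rw [← h]; exact lt_irrefl j)
        simp [hne]
      | zero => simp [herm]
      | add a b _ _ ha hb => simp [herm, mul_add, Finset.sum_add_distrib] at ha hb ⊢; rw [ha, hb]; ring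
      | smul c a _ ha =>
        have hs : herm (v j) (c • a) = c * herm (v j) a := by
          simp [herm, Finset.mul_sum]; ring_nf
          exact Finset.sum_congr rfl fun l _ => by ring
        rw [hs, ha, mul_zero]
    exact hgen _ (hflag i k)
  have hBlow : ∀ j k : Fin n, k < j → B j k = 0 := by
    intro j k hk
    rw [hBapply]
    exact herm_zero_of_span j k hk
  have hre : ∀ j : Fin n, (lam i j).re < 0 := by
    intro j
    apply hstab i
    rw [spectrum.mem_iff]
    intro hU
    rw [Matrix.isUnit_iff_isUnit_det] at hU
    have hconj : algebraMap ℂ (Matrix (Fin n) (Fin n) ℂ) (lam i j) - A i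
        = P.conjTranspose * (algebraMap ℂ (Matrix (Fin n) (Fin n) ℂ) (lam i j) - B) * P := by
      rw [Matrix.mul_sub, Matrix.sub_mul]
      congr 1
      · symm
        rw [Matrix.mul_assoc, Algebra.commutes (lam i j) P, ← Matrix.mul_assoc, hQP, one_mul]
      · symm
        rw [hBdef]
        calc P.conjTranspose * (P * A i * P.conjTranspose) * P
            = (P.conjTranspose * P) * A i * (P.conjTranspose * P) := by
              simp only [Matrix.mul_assoc]
          _ = A i := by rw [hQP, one_mul, Matrix.mul_one]
    have hdetB : (algebraMap ℂ (Matrix (Fin n) (Fin n) ℂ) (lam i j) - B).det = 0 := by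
      have htri : (algebraMap ℂ (Matrix (Fin n) (Fin n) ℂ) (lam i j) - B).BlockTriangular id := by
        intro a b hab
        have hba : b < a := hab
        have hne : a ≠ b := ne_of_gt hba
        simp [Matrix.sub_apply, Matrix.algebraMap_matrix_apply, hne, hBlow a b hba]
      rw [Matrix.det_of_upperTriangular htri]
      refine Finset.prod_eq_zero (Finset.mem_univ j) ?_
      simp [Matrix.sub_apply, Matrix.algebraMap_matrix_apply, hBapply, ← hlam]
    rw [hconj, Matrix.det_mul, Matrix.det_mul, hdetB] at hU
    simp at hU
  set r : Fin n → ℝ := fun j => -(lam i j).re with hrdef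
  have hr : ∀ j, 0 < r j := fun j => by
    have := hre j; simp only [hrdef]; linarith
  have habs : ∀ j, |(lam i j).re| = r j := fun j => abs_of_neg (hre j)
  set X : Fin n → ℝ := fun j => ε j * (r j * Complex.normSq (y j)) with hXdef
  have hXnn : ∀ j, 0 ≤ X j := fun j =>
    mul_nonneg (hεpos j).le (mul_nonneg (hr j).le (Complex.normSq_nonneg _))
  obtain ⟨j0, hj0⟩ := Function.ne_iff.mp hyne
  have hXpos : 0 < ∑ j, X j := Finset.sum_pos' (fun j _ => hXnn j)
    ⟨j0, Finset.mem_univ _, mul_pos (hεpos j0)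
      (mul_pos (hr j0) (Complex.normSq_pos.mpr hj0))⟩
  set g : Fin n × Fin n → ℝ := fun p =>
    if p.1 < p.2 then
      ε p.1 * (((n : ℝ) - 1) ^ 2 / 4) * ‖B p.1 p.2‖ ^ 2 / (r p.2 * r p.1) / ε p.2
    else 0 with hgdef
  have hune : (Finset.univ : Finset (Fin n × Fin n)).Nonempty :=
    ⟨(⟨0, hn⟩, ⟨0, hn⟩), Finset.mem_univ _⟩
  set θ : ℝ := Finset.univ.sup' hune g with hθdef
  have hθ1 : θ < 1 := by
    rw [hθdef, Finset.sup'_lt_iff]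
    intro p _
    by_cases hp : p.1 < p.2
    · simp only [hgdef, if_pos hp]
      rw [div_lt_one (hεpos p.2)]
      have hc := hεcond p.2 i p.1 hp
      rw [habs, habs, ← hBapply] at hc
      exact hc
    · simp only [hgdef, if_neg hp]; norm_num
  have hθ0 : 0 ≤ θ := by
    have h1 : g (j0, j0) ≤ θ := Finset.le_sup' g (Finset.mem_univ _)
    have h2 : g (j0, j0) = 0 := by simp [hgdef]
    linarith
  set sq : ℝ := Real.sqrt θ with hsqdef
  have hs0 : 0 ≤ sq := Real.sqrt_nonneg _
  have hs1 : sq < 1 := by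
    rw [hsqdef, ← Real.sqrt_one]
    exact Real.sqrt_lt_sqrt hθ0 hθ1
  have hs2 : sq ^ 2 = θ := Real.sq_sqrt hθ0
  have hcross : ∀ j k : Fin n, j < k →
      ε j * (B j k * y k * conj (y j)).re ≤ sq / ((n : ℝ) - 1) * (X j + X k) := by
    intro j k hjk
    have hn2 : 2 ≤ n := by
      have h1 : (j : ℕ) < (k : ℕ) := hjk
      have h2 : (k : ℕ) < n := k.isLt
      omega
    have hc : (0 : ℝ) < (n : ℝ) - 1 := by
      have : (2 : ℝ) ≤ (n : ℝ) := by exact_mod_cast hn2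
      linarith
    set p : ℝ := ε j * (‖B j k‖ * (‖y j‖ * ‖y k‖))
      with hpdef
    have h1 : ε j * (B j k * y k * conj (y j)).re ≤ p := by
      rw [hpdef]
      refine mul_le_mul_of_nonneg_left ?_ (hεpos j).le
      calc (B j k * y k * conj (y j)).re
          ≤ ‖B j k * y k * conj (y j)‖ := Complex.re_le_norm _
        _ = ‖B j k‖ * (‖y j‖ * ‖y k‖) := by
            simp [norm_mul, Complex.norm_conj]; ring
    have hp0 : 0 ≤ p := by
      rw [hpdef]
      exact mul_nonneg (hεpos j).le (mul_nonneg (norm_nonneg _)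
        (mul_nonneg (norm_nonneg _) (norm_nonneg _)))
    have hq0 : 0 ≤ sq / ((n : ℝ) - 1) * (X j + X k) :=
      mul_nonneg (div_nonneg hs0 hc.le) (add_nonneg (hXnn j) (hXnn k))
    have hθge : ε j * (((n : ℝ) - 1) ^ 2 / 4) * ‖B j k‖ ^ 2 / (r k * r j) / ε k
        ≤ θ := by
      have hgval : g (j, k)
          = ε j * (((n : ℝ) - 1) ^ 2 / 4) * ‖B j k‖ ^ 2 / (r k * r j) / ε k := by
        simp [hgdef, hjk]
      have h := Finset.le_sup' g (Finset.mem_univ (j, k))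
      rw [hgval] at h
      exact h
    have hkey : ε j * ‖B j k‖ ^ 2 * (((n : ℝ) - 1) ^ 2 / 4)
        ≤ θ * (ε k * (r k * r j)) := by
      have h2 := (div_le_iff₀ (hεpos k)).mp hθge
      have h3 := (div_le_iff₀ (mul_pos (hr k) (hr j))).mp h2
      calc ε j * ‖B j k‖ ^ 2 * (((n : ℝ) - 1) ^ 2 / 4)
          = ε j * (((n : ℝ) - 1) ^ 2 / 4) * ‖B j k‖ ^ 2 := by ring
        _ ≤ θ * ε k * (r k * r j) := h3
        _ = θ * (ε k * (r k * r j)) := by ring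
    have h4 : 4 * (X j * X k) ≤ (X j + X k) ^ 2 := by nlinarith [sq_nonneg (X j - X k)]
    have hsq : p ^ 2 ≤ (sq / ((n : ℝ) - 1) * (X j + X k)) ^ 2 := by
      calc p ^ 2
          = (ε j * ‖B j k‖ ^ 2 * (((n : ℝ) - 1) ^ 2 / 4)) *
              ((4 / ((n : ℝ) - 1) ^ 2) *
                (ε j * (Complex.normSq (y j) * Complex.normSq (y k)))) := by
            rw [hpdef, ← Complex.sq_norm (y j), ← Complex.sq_norm (y k)]
            field_simp
        _ ≤ (θ * (ε k * (r k * r j))) *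
              ((4 / ((n : ℝ) - 1) ^ 2) *
                (ε j * (Complex.normSq (y j) * Complex.normSq (y k)))) := by
            refine mul_le_mul_of_nonneg_right hkey
              (mul_nonneg (by positivity) (mul_nonneg (hεpos j).le
                (mul_nonneg (Complex.normSq_nonneg _) (Complex.normSq_nonneg _))))
        _ = (θ / ((n : ℝ) - 1) ^ 2) * (4 * (X j * X k)) := by
            rw [hXdef]; field_simp
        _ ≤ (θ / ((n : ℝ) - 1) ^ 2) * (X j + X k) ^ 2 := by
            refine mul_le_mul_of_nonneg_left h4 (div_nonneg hθ0 (sq_nonneg _))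
        _ = (sq / ((n : ℝ) - 1) * (X j + X k)) ^ 2 := by
            rw [← hs2]; field_simp
    calc ε j * (B j k * y k * conj (y j)).re ≤ p := h1
      _ ≤ sq / ((n : ℝ) - 1) * (X j + X k) := by
          rw [← Real.sqrt_sq hp0, ← Real.sqrt_sq hq0]
          exact Real.sqrt_le_sqrt hsq
  have hdiag : ∀ j, ε j * (B j j * y j * conj (y j)).re = -X j := by
    intro j
    have hBjj : B j j = lam i j := by rw [hBapply]; exact (hlam i j).symm
    rw [hBjj, mul_assoc, Complex.mul_conj]
    simp only [hXdef, hrdef, Complex.mul_re, Complex.ofReal_re, Complex.ofReal_im,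
      mul_zero, sub_zero]
    ring
  have hgoaly : ∀ j, herm (v j) x = y j := fun j => by rw [hherm, hydef]
  have hS : ∑ j, ε j * (herm (v j) ((A i).mulVec x) * conj (herm (v j) x)).re
      = ∑ j, ∑ k, ε j * (B j k * y k * conj (y j)).re := by
    refine Finset.sum_congr rfl fun j _ => ?_
    rw [hAx j, hgoaly j]
    rw [show B.mulVec y j = ∑ k, B j k * y k from by
      simp [Matrix.mulVec, dotProduct]]
    rw [Finset.sum_mul, Complex.re_sum, Finset.mul_sum]
  have hb1 : ∀ j k : Fin n, ε j * (B j k * y k * conj (y j)).re ≤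
      (if j = k then -X j else if j < k then sq / ((n : ℝ) - 1) * (X j + X k) else 0) := by
    intro j k
    rcases lt_trichotomy j k with h | h | h
    · rw [if_neg (ne_of_lt h), if_pos h]; exact hcross j k h
    · rw [if_pos h]; subst h; exact le_of_eq (hdiag j)
    · rw [if_neg (ne_of_gt h), if_neg (not_lt.mpr h.le), hBlow j k h]; simp
  have hsum_le : ∑ j, ∑ k, ε j * (B j k * y k * conj (y j)).re ≤
      ∑ j : Fin n, ∑ k : Fin n,
        (if j = k then -X j else if j < k then sq / ((n : ℝ) - 1) * (X j + X k) else 0) :=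
    Finset.sum_le_sum fun j _ => Finset.sum_le_sum fun k _ => hb1 j k
  have hsplit : ∀ j k : Fin n,
      (if j = k then -X j else if j < k then sq / ((n : ℝ) - 1) * (X j + X k) else 0)
      = (if j = k then -X j else 0)
        + sq / ((n : ℝ) - 1) * (if j < k then X j + X k else 0) := by
    intro j k
    rcases eq_or_ne j k with h | h
    · subst h; simp
    · simp [h]
  have hpair : ∑ j : Fin n, ∑ k : Fin n, (if j < k then X j + X k else 0)
      = ((n : ℝ) - 1) * ∑ j, X j := by
    have swap : (∑ j : Fin n, ∑ k : Fin n, (if j < k then X k else 0))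
        = ∑ j : Fin n, ∑ k : Fin n, (if k < j then X j else 0) :=
      Finset.sum_comm
    have e3 : ∀ j k : Fin n,
        (if j < k then X j else 0) + (if k < j then X j else 0)
        = X j - (if j = k then X j else 0) := by
      intro j k
      rcases lt_trichotomy j k with h | h | h
      · simp [h, ne_of_lt h, not_lt.mpr h.le]
      · simp [h, lt_irrefl]
      · simp [h, ne_of_gt h, not_lt.mpr h.le]
    calc ∑ j : Fin n, ∑ k : Fin n, (if j < k then X j + X k else 0)
        = ∑ j : Fin n, ∑ k : Fin n,
            ((if j < k then X j else 0) + (if j < k then X k else 0)) := by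
          refine Finset.sum_congr rfl fun j _ => Finset.sum_congr rfl fun k _ => ?_
          split <;> simp
      _ = (∑ j : Fin n, ∑ k : Fin n, (if j < k then X j else 0))
          + ∑ j : Fin n, ∑ k : Fin n, (if j < k then X k else 0) := by
          simp [Finset.sum_add_distrib]
      _ = (∑ j : Fin n, ∑ k : Fin n, (if j < k then X j else 0))
          + ∑ j : Fin n, ∑ k : Fin n, (if k < j then X j else 0) := by rw [swap]
      _ = ∑ j : Fin n, ∑ k : Fin n,
            ((if j < k then X j else 0) + (if k < j then X j else 0)) := by
          simp [Finset.sum_add_distrib]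
      _ = ∑ j : Fin n, ∑ k : Fin n, (X j - (if j = k then X j else 0)) := by
          refine Finset.sum_congr rfl fun j _ => Finset.sum_congr rfl fun k _ => e3 j k
      _ = ∑ j : Fin n, (((n : ℕ) : ℝ) * X j - X j) := by
          refine Finset.sum_congr rfl fun j _ => ?_
          rw [Finset.sum_sub_distrib, Finset.sum_const, Finset.sum_ite_eq]
          simp [Finset.card_univ, nsmul_eq_mul]
      _ = ((n : ℝ) - 1) * ∑ j, X j := by
          rw [Finset.mul_sum]
          refine Finset.sum_congr rfl fun j _ => ?_
          ring
  have hc0 : (0 : ℝ) ≤ (n : ℝ) - 1 := by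
    have : (1 : ℝ) ≤ (n : ℝ) := by exact_mod_cast hn
    linarith
  have hval : ∑ j : Fin n, ∑ k : Fin n,
      (if j = k then -X j else if j < k then sq / ((n : ℝ) - 1) * (X j + X k) else 0)
      = -(∑ j, X j) + sq / ((n : ℝ) - 1) * (((n : ℝ) - 1) * ∑ j, X j) := by
    calc ∑ j : Fin n, ∑ k : Fin n,
        (if j = k then -X j else if j < k then sq / ((n : ℝ) - 1) * (X j + X k) else 0)
        = (∑ j : Fin n, ∑ k : Fin n, (if j = k then -X j else 0))
          + ∑ j : Fin n, ∑ k : Fin n,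
              sq / ((n : ℝ) - 1) * (if j < k then X j + X k else 0) := by
          simp only [hsplit]
          simp [Finset.sum_add_distrib]
      _ = -(∑ j, X j) + sq / ((n : ℝ) - 1) * (((n : ℝ) - 1) * ∑ j, X j) := by
          congr 1
          · simp [Finset.sum_ite_eq, Finset.sum_neg_distrib]
          · rw [← hpair, Finset.mul_sum]
            refine Finset.sum_congr rfl fun j _ => ?_
            rw [Finset.mul_sum]
  have hfin : sq / ((n : ℝ) - 1) * (((n : ℝ) - 1) * ∑ j, X j) ≤ sq * ∑ j, X j := by
    rcases eq_or_lt_of_le hc0 with h | h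
    · rw [← h]
      simp
      exact mul_nonneg hs0 hXpos.le
    · exact le_of_eq (by field_simp)
  rw [hS]
  have hfinal : ∑ j, ∑ k, ε j * (B j k * y k * conj (y j)).re
      ≤ -(∑ j, X j) + sq * ∑ j, X j := by
    calc ∑ j, ∑ k, ε j * (B j k * y k * conj (y j)).re
        ≤ _ := hsum_le
      _ = -(∑ j, X j) + sq / ((n : ℝ) - 1) * (((n : ℝ) - 1) * ∑ j, X j) := hval
      _ ≤ -(∑ j, X j) + sq * ∑ j, X j := by linarith
  nlinarith [mul_pos (sub_pos.mpr hs1) hXpos]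
end

section
/- Let J ∈ ℂⁿˣⁿ and let the degree-one coefficients be given by a_{l,e_r} = J_{lr} (arbitrary coefficients in higher degrees). Then for any multi-indices κ, γ with |κ| = |γ| ≥ 1, the Koopman matrix entry satisfies: G(κ,γ) = Σ_{l=1}^n γ_l · J_{ll} if γ = κ; G(κ,γ) = κ_l · J_{lr} if γ = κ − e_l + e_r for some l ≠ r with κ_l ≥ 1; and G(κ,γ) = 0 in all other cases with |κ| = |γ|. Moreover G(κ,γ) = 0 whenever |γ| < |κ|. -/
open scoped BigOperators

def degm {n : ℕ} (κ : Fin n → ℕ) : ℕ := ∑ l, κ l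

-- Koopman matrix entry G(κ,γ) = Σ_l κ_l · a_{l, γ−κ+e_l} (summand 0 if γ−κ+e_l has a
-- negative component).
open Classical in
noncomputable def koop {n : ℕ} (a : Fin n → (Fin n → ℕ) → ℂ) (κ γ : Fin n → ℕ) : ℂ :=
  ∑ l, if κ ≤ γ + Pi.single l 1 then (κ l : ℂ) * a l (γ + Pi.single l 1 - κ) else 0

lemma degm_mono {n : ℕ} {f g : Fin n → ℕ} (h : f ≤ g) : degm f ≤ degm g :=
  Finset.sum_le_sum fun i _ => h i

lemma degm_sub {n : ℕ} {κ δ : Fin n → ℕ} (h : κ ≤ δ) :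
    degm (δ - κ) = degm δ - degm κ := by
  rw [eq_tsub_iff_add_eq_of_le (degm_mono h)]
  unfold degm
  rw [← Finset.sum_add_distrib]
  refine Finset.sum_congr rfl fun i _ => ?_
  simpa using Nat.sub_add_cancel (h i)

lemma degm_add {n : ℕ} (f g : Fin n → ℕ) : degm (f + g) = degm f + degm g :=
  Finset.sum_add_distrib

lemma degm_single {n : ℕ} (l : Fin n) : degm (Pi.single l 1) = 1 := by
  simp [degm, Finset.sum_pi_single']

lemma eq_zero_of_degm_eq_zero {n : ℕ} {f : Fin n → ℕ} (h : degm f = 0) : f = 0 := by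
  funext i
  exact (Finset.sum_eq_zero_iff.mp h) i (Finset.mem_univ i)

lemma eq_single_of_degm_eq_one {n : ℕ} {f : Fin n → ℕ} (h : degm f = 1) :
    ∃ r, f = Pi.single r 1 := by
  by_cases hz : ∀ i, f i = 0
  · exfalso
    have : degm f = 0 := Finset.sum_eq_zero fun i _ => hz i
    omega
  push_neg at hz
  obtain ⟨r, hr⟩ := hz
  have hsum : f r + ∑ i ∈ Finset.univ.erase r, f i = 1 := by
    rw [Finset.add_sum_erase _ _ (Finset.mem_univ r)]; exact h
  have hfr : f r = 1 := by omega
  have hrest : ∑ i ∈ Finset.univ.erase r, f i = 0 := by omega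
  refine ⟨r, funext fun s => ?_⟩
  by_cases hs : s = r
  · subst hs; simp [hfr]
  · rw [Pi.single_eq_of_ne hs]
    exact (Finset.sum_eq_zero_iff.mp hrest) s (Finset.mem_erase.mpr ⟨hs, Finset.mem_univ s⟩)

/-- Structure of the Koopman matrix entries coming from the linear part of the vector
field: for |κ| = |γ| the entry is Σ_l γ_l J_ll on the diagonal, κ_l J_lr when
γ = κ − e_l + e_r, and 0 otherwise; entries with |γ| < |κ| vanish. -/
theorem stmt2 {n : ℕ} (hn : 1 ≤ n) (J : Matrix (Fin n) (Fin n) ℂ)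
    (a : Fin n → (Fin n → ℕ) → ℂ)
    (ha0 : ∀ l, a l 0 = 0)
    (ha1 : ∀ l r : Fin n, a l (Pi.single r 1) = J l r)
    (κ γ : Fin n → ℕ) :
    (degm κ = degm γ → 1 ≤ degm κ →
      ((γ = κ → koop a κ γ = ∑ l, (γ l : ℂ) * J l l) ∧
       (∀ l r : Fin n, l ≠ r → 1 ≤ κ l → γ + Pi.single l 1 = κ + Pi.single r 1 →
          koop a κ γ = (κ l : ℂ) * J l r) ∧
       (γ ≠ κ →
          (¬ ∃ l r : Fin n, l ≠ r ∧ 1 ≤ κ l ∧ γ + Pi.single l 1 = κ + Pi.single r 1) →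
          koop a κ γ = 0))) ∧
    (degm γ < degm κ → koop a κ γ = 0) := by
  constructor
  · intro hdeg hpos
    refine ⟨?_, ?_, ?_⟩
    · -- diagonal case
      intro hγκ
      subst hγκ
      unfold koop
      refine Finset.sum_congr rfl fun l _ => ?_
      rw [if_pos le_self_add, add_tsub_cancel_left, ha1]
    · -- off-diagonal case
      intro l r hlr hκl heq
      unfold koop
      rw [Finset.sum_eq_single l]
      · rw [if_pos (heq ▸ le_self_add)]
        congr 1
        rw [heq, add_tsub_cancel_left, ha1]
      · intro m _ hml
        rw [if_neg]
        intro hle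
        have h1 := hle l
        have h2 := congrFun heq l
        simp only [Pi.add_apply] at h1 h2
        rw [Pi.single_eq_of_ne (Ne.symm hml)] at h1
        rw [Pi.single_eq_same, Pi.single_eq_of_ne hlr] at h2
        omega
      · intro h; exact absurd (Finset.mem_univ l) h
    · -- remaining zero case
      intro hne hnex
      unfold koop
      refine Finset.sum_eq_zero fun l _ => ?_
      by_cases hle : κ ≤ γ + Pi.single l 1
      · rw [if_pos hle]
        by_cases hκl : κ l = 0
        · simp [hκl]
        · exfalso
          have hdeq : degm (γ + Pi.single l 1 - κ) = 1 := by
            rw [degm_sub hle, degm_add, degm_single]; omega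
          obtain ⟨r, hr⟩ := eq_single_of_degm_eq_one hdeq
          have heq : γ + Pi.single l 1 = κ + Pi.single r 1 := by
            have := tsub_add_cancel_of_le hle
            rw [hr] at this
            rw [← this, add_comm]
          by_cases hrl : r = l
          · subst hrl
            exact hne (add_right_cancel heq)
          · exact hnex ⟨l, r, Ne.symm hrl, by omega, heq⟩
      · rw [if_neg hle]
  · -- |γ| < |κ|
    intro hlt
    unfold koop
    refine Finset.sum_eq_zero fun l _ => ?_
    by_cases hle : κ ≤ γ + Pi.single l 1
    · rw [if_pos hle]
      have h1 : degm κ ≤ degm γ + 1 := by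
        have := degm_mono hle
        rwa [degm_add, degm_single] at this
      have hdeq : degm (γ + Pi.single l 1 - κ) = 0 := by
        rw [degm_sub hle, degm_add, degm_single]; omega
      rw [eq_zero_of_degm_eq_zero hdeq, ha0, mul_zero]
    · rw [if_neg hle]
end

section
/- Suppose the degree-one coefficients satisfy a_{l,e_r} = 0 for all l > r (i.e. the Jacobian matrix J at 0, given by J_{lr} = a_{l,e_r}, is upper triangular). Then the Koopman matrix is upper triangular with respect to the graded lexicographic order: G(κ,γ) = 0 for every pair of multi-indices with γ ≺ κ. -/
open scoped BigOperators

/-- Graded lexicographic order: κ ≺ γ iff |κ| < |γ|, or |κ| = |γ| and κ_j > γ_j at the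
smallest index j where κ and γ differ. -/
def glex {n : ℕ} (κ γ : Fin n → ℕ) : Prop :=
  degm κ < degm γ ∨ (degm κ = degm γ ∧ ∃ j, γ j < κ j ∧ ∀ i, i < j → κ i = γ i)

/-- Lemma 3.2: if the Jacobian at 0 is upper triangular (a_{l,e_r} = 0 for l > r),
then the Koopman matrix is upper triangular with respect to the graded lexicographic
order: G(κ,γ) = 0 whenever γ ≺ κ. -/
theorem stmt3 {n : ℕ} (hn : 1 ≤ n)
    (a : Fin n → (Fin n → ℕ) → ℂ)
    (ha0 : ∀ l, a l 0 = 0)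
    (htri : ∀ l r : Fin n, r < l → a l (Pi.single r 1) = 0)
    (κ γ : Fin n → ℕ) (h : glex γ κ) :
    koop a κ γ = 0 := by
  unfold koop
  apply Finset.sum_eq_zero
  intro l _
  split_ifs with hle
  · set β := γ + Pi.single l 1 - κ with hβdef
    have hadd : ∀ i, β i + κ i = γ i + (Pi.single l 1 : Fin n → ℕ) i := by
      intro i
      have h1 := hle i
      simp only [Pi.add_apply] at h1
      simp only [hβdef, Pi.sub_apply, Pi.add_apply]
      omega
    have hsum : degm β + degm κ = degm γ + 1 := by
      unfold degm
      rw [← Finset.sum_add_distrib]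
      have h1 : ∑ i, (Pi.single l 1 : Fin n → ℕ) i = 1 := by simp
      have h2 : ∑ i, (β i + κ i) = ∑ i, (γ i + (Pi.single l 1 : Fin n → ℕ) i) :=
        Finset.sum_congr rfl (fun i _ => hadd i)
      rw [h2, Finset.sum_add_distrib, h1]
    rcases h with hlt | ⟨heq, j, hj, hmin⟩
    · have hβ0 : degm β = 0 := by omega
      have hz : β = 0 := by
        funext i
        have : β i ≤ degm β :=
          Finset.single_le_sum (f := β) (fun _ _ => Nat.zero_le _) (Finset.mem_univ i)
        simp only [Pi.zero_apply]
        omega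
      rw [hz, ha0, mul_zero]
    · have hβ1 : degm β = 1 := by omega
      have hβj : 1 ≤ β j := by
        have h2 := hadd j
        omega
      have hsingle : β = Pi.single j 1 := by
        funext i
        by_cases hij : i = j
        · subst hij
          have : β i ≤ degm β :=
            Finset.single_le_sum (f := β) (fun _ _ => Nat.zero_le _) (Finset.mem_univ i)
          simp only [Pi.single_eq_same]
          omega
        · have hsub : ({i, j} : Finset (Fin n)) ⊆ Finset.univ := Finset.subset_univ _
          have h2 : β i + β j ≤ degm β := by
            have := Finset.sum_le_sum_of_subset (f := β) hsub
            rw [Finset.sum_pair hij] at this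
            exact this
          simp only [Pi.single_apply, if_neg hij]
          omega
      have hjl : j < l := by
        rcases lt_trichotomy l j with hlj | hlj | hlj
        · exfalso
          have hγl := hmin l hlj
          have h2 := hadd l
          have h3 : (Pi.single l 1 : Fin n → ℕ) l = 1 := Pi.single_eq_same l 1
          have h4 : β l = 1 := by omega
          rw [hsingle] at h4
          rw [Pi.single_apply, if_neg (ne_of_lt hlj)] at h4
          exact one_ne_zero h4.symm
        · exfalso
          subst hlj
          have h2 := hadd l
          have h3 : (Pi.single l 1 : Fin n → ℕ) l = 1 := Pi.single_eq_same l 1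
          have h4 : β l = 1 := by rw [hsingle]; exact Pi.single_eq_same l 1
          omega
        · exact hlj
      rw [hsingle, htri l j hjl, mul_zero]
  · rfl
end

section
/- Let ρ ∈ (0,1], let ε assign a positive real ε_κ to each multi-index κ with |κ| ≥ 1 such that Σ_κ |κ|·ε_κ·ρ^{2|κ|} < ∞, let F : Dⁿ(0,ρ) → ℂⁿ satisfy |F_s(w)| ≤ M for all w ∈ Dⁿ(0,ρ) and s ∈ {1,…,n}, and let w : [0,∞) → ℂⁿ be differentiable with w′(t) = F(w(t)) and w(t) ∈ Dⁿ(0,ρ) for all t ≥ 0. Then for every multi-index κ with |κ| ≥ 1 the function g_κ(t) = |w(t)^κ|² is differentiable with |g_κ′(t)| ≤ 2M·|κ|·ρ^{2|κ|−1}; consequently the family (ε_κ g_κ′(t))_{|κ|≥1} is absolutely summable with Σ_κ ε_κ|g_κ′(t)| ≤ (2M/ρ)·Σ_κ |κ|ε_κρ^{2|κ|} for every t, and the function t ↦ Σ′_κ ε_κ g_κ(t) is differentiable with derivative Σ′_κ ε_κ g_κ′(t). -/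
open scoped BigOperators
open Finset Filter

noncomputable def mpow {n : ℕ} (z : Fin n → ℂ) (κ : Fin n → ℕ) : ℂ := ∏ l, z l ^ κ l

def polydisk (n : ℕ) (ρ : ℝ) : Set (Fin n → ℂ) := {z | ∀ l, ‖z l‖ < ρ}

lemma abs_pow_sub_pow_le' (ρ : ℝ) (hρ : 0 < ρ) (x y : ℂ)
    (hx : ‖x‖ ≤ ρ) (hy : ‖y‖ ≤ ρ) (k : ℕ) :
    ‖x ^ k - y ^ k‖ ≤ k * (ρ ^ k / ρ) * ‖x - y‖ := by
  rw [← geom_sum₂_mul x y k, norm_mul]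
  refine mul_le_mul_of_nonneg_right ?_ (norm_nonneg _)
  calc ‖∑ i ∈ Finset.range k, x ^ i * y ^ (k - 1 - i)‖
      ≤ ∑ i ∈ Finset.range k, ‖x ^ i * y ^ (k - 1 - i)‖ :=
        norm_sum_le _ _
    _ ≤ ∑ _i ∈ Finset.range k, ρ ^ k / ρ := by
        refine Finset.sum_le_sum fun i hi => ?_
        rw [Finset.mem_range] at hi
        have hpow : ρ ^ (k - 1) = ρ ^ k / ρ := by
          rw [eq_div_iff hρ.ne', ← pow_succ]
          congr 1
          omega
        rw [norm_mul, norm_pow, norm_pow, ← hpow]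
        calc ‖x‖ ^ i * ‖y‖ ^ (k - 1 - i)
            ≤ ρ ^ i * ρ ^ (k - 1 - i) := by
              exact mul_le_mul (pow_le_pow_left₀ (norm_nonneg _) hx i)
                (pow_le_pow_left₀ (norm_nonneg _) hy _) (by positivity) (by positivity)
          _ = ρ ^ (k - 1) := by rw [← pow_add]; congr 1; omega
    _ = k * (ρ ^ k / ρ) := by
        rw [Finset.sum_const, Finset.card_range, nsmul_eq_mul]

lemma abs_prod_pow_le {n : ℕ} (ρ : ℝ) (hρ : 0 ≤ ρ) (z : Fin n → ℂ)
    (hz : ∀ l, ‖z l‖ ≤ ρ) (κ : Fin n → ℕ) (s : Finset (Fin n)) :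
    ‖∏ l ∈ s, z l ^ κ l‖ ≤ ρ ^ (∑ l ∈ s, κ l) := by
  rw [norm_prod, ← Finset.prod_pow_eq_pow_sum]
  exact Finset.prod_le_prod (fun l _ => by positivity)
    (fun l _ => by rw [norm_pow]; exact pow_le_pow_left₀ (norm_nonneg _) (hz l) _)

lemma abs_prod_sub_prod_le {n : ℕ} (ρ : ℝ) (hρ : 0 < ρ) (z ζ : Fin n → ℂ)
    (hz : ∀ l, ‖z l‖ ≤ ρ) (hζ : ∀ l, ‖ζ l‖ ≤ ρ)
    (δ : ℝ) (hδ : 0 ≤ δ) (hzζ : ∀ l, ‖z l - ζ l‖ ≤ δ) (κ : Fin n → ℕ)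
    (s : Finset (Fin n)) :
    ‖∏ l ∈ s, z l ^ κ l - ∏ l ∈ s, ζ l ^ κ l‖
      ≤ (∑ l ∈ s, κ l) * (ρ ^ (∑ l ∈ s, κ l) / ρ) * δ := by
  classical
  induction s using Finset.induction_on with
  | empty => simp
  | @insert a s ha ih =>
    rw [Finset.prod_insert ha, Finset.prod_insert ha, Finset.sum_insert ha]
    have key : z a ^ κ a * ∏ l ∈ s, z l ^ κ l - ζ a ^ κ a * ∏ l ∈ s, ζ l ^ κ l
        = z a ^ κ a * (∏ l ∈ s, z l ^ κ l - ∏ l ∈ s, ζ l ^ κ l)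
          + (z a ^ κ a - ζ a ^ κ a) * ∏ l ∈ s, ζ l ^ κ l := by ring
    rw [key]
    refine (norm_add_le _ _).trans ?_
    rw [norm_mul, norm_mul, norm_pow]
    have h1 : ‖z a‖ ^ κ a ≤ ρ ^ κ a :=
      pow_le_pow_left₀ (norm_nonneg _) (hz a) _
    have h3 : ‖z a ^ κ a - ζ a ^ κ a‖ ≤ κ a * (ρ ^ κ a / ρ) * δ :=
      (abs_pow_sub_pow_le' ρ hρ (z a) (ζ a) (hz a) (hζ a) (κ a)).trans
        (mul_le_mul_of_nonneg_left (hzζ a) (by positivity))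
    have h4 : ‖∏ l ∈ s, ζ l ^ κ l‖ ≤ ρ ^ (∑ l ∈ s, κ l) :=
      abs_prod_pow_le ρ hρ.le ζ hζ κ s
    calc ‖z a‖ ^ κ a * ‖∏ l ∈ s, z l ^ κ l - ∏ l ∈ s, ζ l ^ κ l‖
          + ‖z a ^ κ a - ζ a ^ κ a‖ * ‖∏ l ∈ s, ζ l ^ κ l‖
        ≤ ρ ^ κ a * ((∑ l ∈ s, κ l) * (ρ ^ (∑ l ∈ s, κ l) / ρ) * δ)
          + (κ a * (ρ ^ κ a / ρ) * δ) * ρ ^ (∑ l ∈ s, κ l) := by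
          refine add_le_add (mul_le_mul h1 ih (norm_nonneg _) (by positivity))
            (mul_le_mul h3 h4 (norm_nonneg _) (by positivity))
      _ = ((κ a + ∑ l ∈ s, κ l : ℕ) : ℝ) * (ρ ^ (κ a + ∑ l ∈ s, κ l) / ρ) * δ := by
          rw [pow_add]; push_cast; ring

lemma hasDerivAt_comp_pow {φ : ℝ → ℂ} {φ' : ℂ} {t : ℝ} (h : HasDerivAt φ φ' t) (k : ℕ) :
    HasDerivAt (fun s => φ s ^ k) ((k : ℂ) * φ t ^ (k - 1) * φ') t := by
  have hg := ((hasDerivAt_pow k (φ t)).hasFDerivAt.restrictScalars ℝ).comp_hasDerivAt t h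
  convert hg using 1
  · rfl
  · rfl
  simp [mul_comm]

lemma hasDerivAt_tsum_of_lipschitz {ι : Type*} (f : ι → ℝ → ℝ) (f' L : ι → ℝ) (x : ℝ)
    (hL : Summable L) (hf'L : ∀ i, |f' i| ≤ L i)
    (hderiv : ∀ i, HasDerivAt (f i) (f' i) x)
    (hfsum : Summable (fun i => f i x))
    (hlip : ∀ᶠ y in nhds x, ∀ i, |f i y - f i x| ≤ L i * |y - x|) :
    HasDerivAt (fun y => ∑' i, f i y) (∑' i, f' i) x := by
  classical
  have hf'sum : Summable f' := Summable.of_norm_bounded hL (fun i => by simpa using hf'L i)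
  rw [hasDerivAt_iff_isLittleO, Asymptotics.isLittleO_iff]
  intro c hc
  have h3 : (0:ℝ) < c/3 := by positivity
  obtain ⟨T, hT⟩ : ∃ T : Finset ι, ∑' i : {i // i ∉ T}, L i.1 < c/3 :=
    ((tendsto_order.1 (tendsto_tsum_compl_atTop_zero L)).2 _ h3).exists
  have hfin : HasDerivAt (fun y => ∑ i ∈ T, f i y) (∑ i ∈ T, f' i) x :=
    HasDerivAt.fun_sum (fun i _ => hderiv i)
  have hev1 := (Asymptotics.isLittleO_iff.mp (hasDerivAt_iff_isLittleO.mp hfin)) h3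
  filter_upwards [hev1, hlip] with y h1 h2
  have hdiff : Summable (fun i => f i y - f i x) :=
    Summable.of_norm_bounded (hL.mul_right _)
      (fun i => by simpa using h2 i)
  have hfy : Summable (fun i => f i y) := by
    have := hfsum.add hdiff
    simpa using this
  have e1 := Summable.sum_add_tsum_subtype_compl hfy T
  have e2 := Summable.sum_add_tsum_subtype_compl hfsum T
  have e3 := Summable.sum_add_tsum_subtype_compl hf'sum T
  have hLy : Summable (fun i : {i // i ∉ T} => L i.1 * |y - x|) := (hL.mul_right _).subtype _
  have habsT : Summable (fun i : {i // i ∉ T} => |f i.1 y - f i.1 x|) :=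
    Summable.of_nonneg_of_le (fun _ => abs_nonneg _) (fun i => h2 i.1) hLy
  have key : (∑' i, f i y) - (∑' i, f i x) - (y - x) • (∑' i, f' i)
      = ((∑ i ∈ T, f i y) - (∑ i ∈ T, f i x) - (y - x) • (∑ i ∈ T, f' i))
        + (∑' i : {i // i ∉ T}, (f i.1 y - f i.1 x))
        - (y - x) • (∑' i : {i // i ∉ T}, f' i.1) := by
    have e4 : ∑' i : {i // i ∉ T}, (f i.1 y - f i.1 x)
        = (∑' i : {i // i ∉ T}, f i.1 y) - ∑' i : {i // i ∉ T}, f i.1 x :=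
      Summable.tsum_sub (hfy.subtype _) (hfsum.subtype _)
    rw [← e1, ← e2, ← e3, e4]
    simp only [smul_eq_mul]
    ring
  have tail1 : ‖∑' i : {i // i ∉ T}, (f i.1 y - f i.1 x)‖ ≤ c/3 * ‖y - x‖ := by
    refine (norm_tsum_le_tsum_norm (by simpa using habsT)).trans ?_
    have step : ∑' i : {i // i ∉ T}, ‖f i.1 y - f i.1 x‖
        ≤ ∑' i : {i // i ∉ T}, L i.1 * |y - x| :=
      Summable.tsum_le_tsum (fun i => by simpa using h2 i.1) (by simpa using habsT) hLy
    refine step.trans ?_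
    rw [tsum_mul_right]
    calc (∑' i : {i // i ∉ T}, L i.1) * |y - x| ≤ c/3 * |y - x| :=
          mul_le_mul_of_nonneg_right hT.le (abs_nonneg _)
      _ = c/3 * ‖y - x‖ := by rw [Real.norm_eq_abs]
  have tail2 : ‖(y - x) • (∑' i : {i // i ∉ T}, f' i.1)‖ ≤ c/3 * ‖y - x‖ := by
    rw [norm_smul]
    have hLn : Summable (fun i : {i // i ∉ T} => ‖f' i.1‖) :=
      Summable.of_nonneg_of_le (fun _ => norm_nonneg _)
        (fun i => by simpa using hf'L i.1) (hL.subtype _)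
    have hn : ‖∑' i : {i // i ∉ T}, f' i.1‖ ≤ c/3 := by
      refine (norm_tsum_le_tsum_norm hLn).trans ?_
      exact (Summable.tsum_le_tsum (fun i => by simpa using hf'L i.1) hLn (hL.subtype _)).trans hT.le
    calc ‖y - x‖ * ‖∑' i : {i // i ∉ T}, f' i.1‖ ≤ ‖y - x‖ * (c/3) :=
          mul_le_mul_of_nonneg_left hn (norm_nonneg _)
      _ = c/3 * ‖y - x‖ := by ring
  calc ‖(∑' i, f i y) - (∑' i, f i x) - (y - x) • (∑' i, f' i)‖
      ≤ ‖(∑ i ∈ T, f i y) - (∑ i ∈ T, f i x) - (y - x) • (∑ i ∈ T, f' i)‖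
        + ‖∑' i : {i // i ∉ T}, (f i.1 y - f i.1 x)‖
        + ‖(y - x) • (∑' i : {i // i ∉ T}, f' i.1)‖ := by
        rw [key]
        exact (norm_sub_le _ _).trans (by gcongr; exact norm_add_le _ _)
    _ ≤ c/3 * ‖y - x‖ + c/3 * ‖y - x‖ + c/3 * ‖y - x‖ :=
        add_le_add (add_le_add h1 tail1) tail2
    _ = c * ‖y - x‖ := by ring

set_option maxHeartbeats 1000000 in
/-- Lemma 3.4, second series: along a trajectory w of a bounded vector field F staying
in the polydisk Dⁿ(0,ρ), the functions g_κ(t) = |w(t)^κ|² are differentiable with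
|g_κ′(t)| ≤ 2M|κ|ρ^{2|κ|−1}; hence Σ ε_κ g_κ′(t) converges absolutely and
t ↦ Σ′ ε_κ g_κ(t) can be differentiated term by term. -/
theorem stmt6 {n : ℕ} (hn : 1 ≤ n) (ρ : ℝ) (hρ0 : 0 < ρ) (hρ1 : ρ ≤ 1)
    (ε : (Fin n → ℕ) → ℝ) (hεpos : ∀ κ, 1 ≤ degm κ → 0 < ε κ)
    (hsum : Summable fun κ : {κ : Fin n → ℕ // 1 ≤ degm κ} =>
      (degm κ.1 : ℝ) * ε κ.1 * ρ ^ (2 * degm κ.1))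
    (M : ℝ) (F : (Fin n → ℂ) → Fin n → ℂ)
    (hFbd : ∀ w ∈ polydisk n ρ, ∀ s : Fin n, ‖F w s‖ ≤ M)
    (w : ℝ → Fin n → ℂ)
    (hw : ∀ t : ℝ, 0 ≤ t → HasDerivAt w (F (w t)) t)
    (hwin : ∀ t : ℝ, 0 ≤ t → w t ∈ polydisk n ρ) :
    ∃ g' : (Fin n → ℕ) → ℝ → ℝ,
      (∀ κ : Fin n → ℕ, 1 ≤ degm κ → ∀ t : ℝ, 0 ≤ t →
        HasDerivAt (fun s => ‖mpow (w s) κ‖ ^ 2) (g' κ t) t) ∧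
      (∀ κ : Fin n → ℕ, 1 ≤ degm κ → ∀ t : ℝ, 0 ≤ t →
        |g' κ t| ≤ 2 * M * (degm κ : ℝ) * ρ ^ (2 * degm κ - 1)) ∧
      (∀ t : ℝ, 0 ≤ t →
        Summable (fun κ : {κ : Fin n → ℕ // 1 ≤ degm κ} => ε κ.1 * |g' κ.1 t|) ∧
        ∑' κ : {κ : Fin n → ℕ // 1 ≤ degm κ}, ε κ.1 * |g' κ.1 t| ≤
          (2 * M / ρ) * ∑' κ : {κ : Fin n → ℕ // 1 ≤ degm κ},
            (degm κ.1 : ℝ) * ε κ.1 * ρ ^ (2 * degm κ.1)) ∧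
      (∀ t : ℝ, 0 ≤ t →
        HasDerivAt
          (fun s => ∑' κ : {κ : Fin n → ℕ // 1 ≤ degm κ},
            ε κ.1 * ‖mpow (w s) κ.1‖ ^ 2)
          (∑' κ : {κ : Fin n → ℕ // 1 ≤ degm κ}, ε κ.1 * g' κ.1 t) t) := by
  classical
  have hM : 0 ≤ M := by
    have h0 : (fun _ : Fin n => (0:ℂ)) ∈ polydisk n ρ := fun l => by simpa using hρ0
    exact (norm_nonneg _).trans (hFbd _ h0 ⟨0, hn⟩)
  set D : (Fin n → ℕ) → ℝ → ℂ := fun κ t =>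
    ∑ l, (∏ j ∈ Finset.univ.erase l, w t j ^ κ j) *
      ((κ l : ℂ) * w t l ^ (κ l - 1) * F (w t) l) with hD_def
  set G : (Fin n → ℕ) → ℝ → ℝ := fun κ t =>
    (D κ t * star (mpow (w t) κ) + mpow (w t) κ * star (D κ t)).re with hG_def
  have hmp : ∀ κ : Fin n → ℕ, ∀ t : ℝ, 0 ≤ t →
      HasDerivAt (fun s => mpow (w s) κ) (D κ t) t := by
    intro κ t ht
    have h := HasDerivAt.fun_finsetProd (𝕜 := ℝ) (u := Finset.univ)
      (f := fun l s => w s l ^ κ l)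
      (f' := fun l => (κ l : ℂ) * w t l ^ (κ l - 1) * F (w t) l)
      (fun l _ => by exact hasDerivAt_comp_pow ((hasDerivAt_pi.1 (hw t ht)) l) (κ l))
    simpa [mpow, smul_eq_mul, hD_def] using h
  have hderivG : ∀ κ : Fin n → ℕ, ∀ t : ℝ, 0 ≤ t →
      HasDerivAt (fun s => ‖mpow (w s) κ‖ ^ 2) (G κ t) t := by
    intro κ t ht
    have h1 : HasDerivAt (fun s => mpow (w s) κ * star (mpow (w s) κ))
        (D κ t * star (mpow (w t) κ) + mpow (w t) κ * star (D κ t)) t :=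
      (hmp κ t ht).mul (hmp κ t ht).star
    have h2 : HasDerivAt (fun s => (mpow (w s) κ * star (mpow (w s) κ)).re)
        ((D κ t * star (mpow (w t) κ) + mpow (w t) κ * star (D κ t)).re) t :=
      (Complex.reCLM.hasFDerivAt).comp_hasDerivAt t h1
    have funeq : (fun s : ℝ => ‖mpow (w s) κ‖ ^ 2)
        = fun s => (mpow (w s) κ * star (mpow (w s) κ)).re := by
      funext s
      rw [Complex.sq_norm,
        show star (mpow (w s) κ) = (starRingEnd ℂ) (mpow (w s) κ) from rfl,
        Complex.mul_conj, Complex.ofReal_re]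
    rw [funeq]
    simp only [hG_def]
    exact h2
  have hZb : ∀ κ : Fin n → ℕ, ∀ t : ℝ, 0 ≤ t →
      ‖mpow (w t) κ‖ ≤ ρ ^ degm κ := by
    intro κ t ht
    have := abs_prod_pow_le ρ hρ0.le (w t) (fun l => (hwin t ht l).le) κ Finset.univ
    simpa [mpow, degm] using this
  have hDb : ∀ κ : Fin n → ℕ, 1 ≤ degm κ → ∀ t : ℝ, 0 ≤ t →
      ‖D κ t‖ ≤ (degm κ : ℝ) * (ρ ^ degm κ / ρ) * M := by
    intro κ hκ t ht
    have hzb : ∀ l, ‖w t l‖ ≤ ρ := fun l => (hwin t ht l).le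
    refine (norm_sum_le _ _).trans ?_
    have hterm : ∀ l : Fin n,
        ‖(∏ j ∈ Finset.univ.erase l, w t j ^ κ j) *
          ((κ l : ℂ) * w t l ^ (κ l - 1) * F (w t) l)‖
        ≤ (κ l : ℝ) * (ρ ^ degm κ / ρ) * M := by
      intro l
      rcases Nat.eq_zero_or_pos (κ l) with h0 | hpos
      · simp [h0]
      · have e1 : ‖∏ j ∈ Finset.univ.erase l, w t j ^ κ j‖
            ≤ ρ ^ (∑ j ∈ Finset.univ.erase l, κ j) := abs_prod_pow_le ρ hρ0.le (w t) hzb κ _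
        have e2 : ‖w t l‖ ^ (κ l - 1) ≤ ρ ^ (κ l - 1) :=
          pow_le_pow_left₀ (norm_nonneg _) (hzb l) _
        have e3 : ‖F (w t) l‖ ≤ M := hFbd _ (hwin t ht) l
        have e5 : ρ ^ (∑ j ∈ Finset.univ.erase l, κ j) * ρ ^ (κ l - 1) = ρ ^ degm κ / ρ := by
          rw [← pow_add, eq_div_iff hρ0.ne', ← pow_succ]
          congr 1
          have h6 := Finset.sum_erase_add Finset.univ κ (Finset.mem_univ l)
          have h7 : degm κ = ∑ x ∈ Finset.univ, κ x := rfl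
          omega
        have hQR : ‖w t l‖ ^ (κ l - 1) * ‖F (w t) l‖
            ≤ ρ ^ (κ l - 1) * M :=
          mul_le_mul e2 e3 (norm_nonneg _) (by positivity)
        have h6 : (κ l : ℝ) * ‖w t l‖ ^ (κ l - 1) * ‖F (w t) l‖
            ≤ (κ l : ℝ) * (ρ ^ (κ l - 1) * M) := by
          rw [mul_assoc]
          exact mul_le_mul_of_nonneg_left hQR (Nat.cast_nonneg _)
        calc ‖(∏ j ∈ Finset.univ.erase l, w t j ^ κ j) *
              ((κ l : ℂ) * w t l ^ (κ l - 1) * F (w t) l)‖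
            = ‖∏ j ∈ Finset.univ.erase l, w t j ^ κ j‖ *
              ((κ l : ℝ) * ‖w t l‖ ^ (κ l - 1) * ‖F (w t) l‖) := by
              rw [norm_mul, norm_mul, norm_mul, norm_pow, Complex.norm_natCast]
          _ ≤ ρ ^ (∑ j ∈ Finset.univ.erase l, κ j) * ((κ l : ℝ) * (ρ ^ (κ l - 1) * M)) := by
              refine mul_le_mul e1 h6 ?_ (by positivity)
              exact mul_nonneg (mul_nonneg (Nat.cast_nonneg _)
                (pow_nonneg (norm_nonneg _) _)) (norm_nonneg _)
          _ = (κ l : ℝ) * (ρ ^ degm κ / ρ) * M := by rw [← e5]; ring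
    refine (Finset.sum_le_sum fun l _ => hterm l).trans_eq ?_
    rw [← Finset.sum_mul, ← Finset.sum_mul]
    congr 2
    rw [degm, Nat.cast_sum]
  have hGb : ∀ κ : Fin n → ℕ, 1 ≤ degm κ → ∀ t : ℝ, 0 ≤ t →
      |G κ t| ≤ 2 * M * (degm κ : ℝ) * ρ ^ (2 * degm κ - 1) := by
    intro κ hκ t ht
    have hZ := hZb κ t ht
    have hD := hDb κ hκ t ht
    have e : ρ ^ (2 * degm κ - 1) = ρ ^ degm κ * ρ ^ degm κ / ρ := by
      rw [eq_div_iff hρ0.ne', ← pow_add, ← pow_succ]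
      congr 1
      omega
    have habs : |G κ t| ≤ ‖D κ t‖ * ‖mpow (w t) κ‖
        + ‖mpow (w t) κ‖ * ‖D κ t‖ := by
      refine (Complex.abs_re_le_norm _).trans ?_
      refine (norm_add_le _ _).trans ?_
      simp [norm_mul, Complex.norm_conj]
    have hDM : 0 ≤ (degm κ : ℝ) * (ρ ^ degm κ / ρ) * M :=
      mul_nonneg (mul_nonneg (Nat.cast_nonneg _) (by positivity)) hM
    have hb1 : ‖D κ t‖ * ‖mpow (w t) κ‖
        ≤ ((degm κ : ℝ) * (ρ ^ degm κ / ρ) * M) * ρ ^ degm κ :=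
      mul_le_mul hD hZ (norm_nonneg _) hDM
    have hb2 : ‖mpow (w t) κ‖ * ‖D κ t‖
        ≤ ρ ^ degm κ * ((degm κ : ℝ) * (ρ ^ degm κ / ρ) * M) :=
      mul_le_mul hZ hD (norm_nonneg _) (by positivity)
    refine habs.trans ((add_le_add hb1 hb2).trans_eq ?_)
    rw [e]; ring
  have hbound : ∀ κ : {κ : Fin n → ℕ // 1 ≤ degm κ}, ∀ t : ℝ, 0 ≤ t →
      ε κ.1 * |G κ.1 t| ≤ (2 * M / ρ) * ((degm κ.1 : ℝ) * ε κ.1 * ρ ^ (2 * degm κ.1)) := by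
    intro κ t ht
    have h1 := hGb κ.1 κ.2 t ht
    have hε := (hεpos κ.1 κ.2).le
    have e : ρ ^ (2 * degm κ.1 - 1) = ρ ^ (2 * degm κ.1) / ρ := by
      rw [eq_div_iff hρ0.ne', ← pow_succ]
      congr 1
      have := κ.2
      omega
    calc ε κ.1 * |G κ.1 t| ≤ ε κ.1 * (2 * M * (degm κ.1 : ℝ) * ρ ^ (2 * degm κ.1 - 1)) :=
          mul_le_mul_of_nonneg_left h1 hε
      _ = (2 * M / ρ) * ((degm κ.1 : ℝ) * ε κ.1 * ρ ^ (2 * degm κ.1)) := by rw [e]; ring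
  refine ⟨G, fun κ _ t ht => hderivG κ t ht, hGb, ?_, ?_⟩
  · intro t ht
    have hs1 : Summable (fun κ : {κ : Fin n → ℕ // 1 ≤ degm κ} => ε κ.1 * |G κ.1 t|) :=
      Summable.of_nonneg_of_le
        (fun κ => mul_nonneg (hεpos κ.1 κ.2).le (abs_nonneg _))
        (fun κ => hbound κ t ht) (hsum.mul_left _)
    refine ⟨hs1, ?_⟩
    have h := Summable.tsum_le_tsum (fun κ => hbound κ t ht) hs1 (hsum.mul_left _)
    rwa [tsum_mul_left] at h
  · intro t ht
    have hwc : ContinuousAt w t := (hw t ht).continuousAt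
    have ev1 : ∀ᶠ y in nhds t, ∀ l, ‖w y l‖ ≤ ρ := by
      rw [Filter.eventually_all]
      intro l
      have hc : Tendsto (fun y => ‖w y l‖) (nhds t) (nhds (‖w t l‖)) :=
        (continuous_norm.continuousAt.comp ((continuous_apply l).continuousAt.comp hwc))
      exact (hc.eventually_lt_const (hwin t ht l)).mono fun y hy => hy.le
    have ev2 : ∀ᶠ y in nhds t, ‖w y - w t‖ ≤ (M + 1) * |y - t| := by
      have hFM : ‖F (w t)‖ ≤ M := by
        rw [pi_norm_le_iff_of_nonneg hM]
        intro l
        simpa using hFbd _ (hwin t ht) l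
      have h1 := (Asymptotics.isLittleO_iff.mp (hasDerivAt_iff_isLittleO.mp (hw t ht))) one_pos
      filter_upwards [h1] with y hy
      have htri : ‖w y - w t‖ ≤ ‖w y - w t - (y - t) • F (w t)‖ + ‖(y - t) • F (w t)‖ := by
        simpa using norm_add_le (w y - w t - (y - t) • F (w t)) ((y - t) • F (w t))
      refine htri.trans ?_
      rw [norm_smul, Real.norm_eq_abs]
      have h2 := mul_le_mul_of_nonneg_left hFM (abs_nonneg (y - t))
      calc ‖w y - w t - (y - t) • F (w t)‖ + |y - t| * ‖F (w t)‖
          ≤ 1 * ‖y - t‖ + |y - t| * M := add_le_add hy h2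
        _ = (M + 1) * |y - t| := by rw [Real.norm_eq_abs]; ring
    have hL : Summable (fun κ : {κ : Fin n → ℕ // 1 ≤ degm κ} =>
        ε κ.1 * (2 * (M + 1) * (degm κ.1 : ℝ) * (ρ ^ (2 * degm κ.1) / ρ))) := by
      refine (hsum.mul_left (2 * (M + 1) / ρ)).congr fun κ => by ring
    refine hasDerivAt_tsum_of_lipschitz (ι := {κ : Fin n → ℕ // 1 ≤ degm κ})
      (fun κ s => ε κ.1 * ‖mpow (w s) κ.1‖ ^ 2)
      (fun κ => ε κ.1 * G κ.1 t)
      (fun κ => ε κ.1 * (2 * (M + 1) * (degm κ.1 : ℝ) * (ρ ^ (2 * degm κ.1) / ρ)))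
      t hL ?_ ?_ ?_ ?_
    · intro κ
      rw [abs_mul, abs_of_nonneg (hεpos κ.1 κ.2).le]
      refine mul_le_mul_of_nonneg_left ?_ (hεpos κ.1 κ.2).le
      refine (hGb κ.1 κ.2 t ht).trans ?_
      have e : ρ ^ (2 * degm κ.1 - 1) = ρ ^ (2 * degm κ.1) / ρ := by
        rw [eq_div_iff hρ0.ne', ← pow_succ]
        congr 1
        have := κ.2
        omega
      rw [e]
      have hq : (0:ℝ) ≤ ρ ^ (2 * degm κ.1) / ρ := by positivity
      nlinarith [Nat.cast_nonneg (α := ℝ) (degm κ.1)]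
    · intro κ
      exact (hderivG κ.1 t ht).const_mul (ε κ.1)
    · refine Summable.of_nonneg_of_le
        (fun κ => mul_nonneg (hεpos κ.1 κ.2).le (by positivity)) ?_ hsum
      intro κ
      have hε := (hεpos κ.1 κ.2).le
      have h1 : ‖mpow (w t) κ.1‖ ^ 2 ≤ ρ ^ (2 * degm κ.1) := by
        calc ‖mpow (w t) κ.1‖ ^ 2 ≤ (ρ ^ degm κ.1) ^ 2 :=
              pow_le_pow_left₀ (norm_nonneg _) (hZb κ.1 t ht) 2
          _ = ρ ^ (2 * degm κ.1) := by rw [← pow_mul, Nat.mul_comm]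
      have h2 : (1:ℝ) ≤ (degm κ.1 : ℝ) := by exact_mod_cast κ.2
      have h3 : (0:ℝ) ≤ ρ ^ (2 * degm κ.1) := by positivity
      calc ε κ.1 * ‖mpow (w t) κ.1‖ ^ 2 ≤ ε κ.1 * ρ ^ (2 * degm κ.1) :=
            mul_le_mul_of_nonneg_left h1 hε
        _ ≤ (degm κ.1 : ℝ) * ε κ.1 * ρ ^ (2 * degm κ.1) := by
            nlinarith [mul_nonneg hε h3]
    · filter_upwards [ev1, ev2] with y h1 h2
      intro κ
      have hε := (hεpos κ.1 κ.2).le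
      have hζb : ∀ l, ‖w t l‖ ≤ ρ := fun l => (hwin t ht l).le
      have hδ : (0:ℝ) ≤ ‖w y - w t‖ := norm_nonneg _
      have hco : ∀ l, ‖w y l - w t l‖ ≤ ‖w y - w t‖ := by
        intro l
        simpa using norm_le_pi_norm (w y - w t) l
      have hmps : ‖mpow (w y) κ.1 - mpow (w t) κ.1‖
          ≤ (degm κ.1 : ℝ) * (ρ ^ degm κ.1 / ρ) * ‖w y - w t‖ := by
        have := abs_prod_sub_prod_le ρ hρ0 (w y) (w t) h1 hζb _ hδ hco κ.1 Finset.univ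
        simpa [mpow, degm] using this
      have hab : |‖mpow (w y) κ.1‖ - ‖mpow (w t) κ.1‖|
          ≤ ‖mpow (w y) κ.1 - mpow (w t) κ.1‖ :=
        abs_norm_sub_norm_le _ _
      have ha : ‖mpow (w y) κ.1‖ ≤ ρ ^ degm κ.1 := by
        have := abs_prod_pow_le ρ hρ0.le (w y) h1 κ.1 Finset.univ
        simpa [mpow, degm] using this
      have hb : ‖mpow (w t) κ.1‖ ≤ ρ ^ degm κ.1 := hZb κ.1 t ht
      set a := ‖mpow (w y) κ.1‖ with ha_def
      set b := ‖mpow (w t) κ.1‖ with hb_def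
      have hanneg : 0 ≤ a := norm_nonneg _
      have hbnneg : 0 ≤ b := norm_nonneg _
      have key : |a ^ 2 - b ^ 2| ≤ (a + b) * |a - b| := by
        have h : a ^ 2 - b ^ 2 = (a + b) * (a - b) := by ring
        rw [h, abs_mul, abs_of_nonneg (add_nonneg hanneg hbnneg)]
      have hnn : (0:ℝ) ≤ (degm κ.1 : ℝ) * (ρ ^ degm κ.1 / ρ) :=
        mul_nonneg (Nat.cast_nonneg _) (by positivity)
      calc |ε κ.1 * a ^ 2 - ε κ.1 * b ^ 2| = ε κ.1 * |a ^ 2 - b ^ 2| := by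
            rw [← mul_sub, abs_mul, abs_of_nonneg hε]
        _ ≤ ε κ.1 * ((a + b) * |a - b|) := mul_le_mul_of_nonneg_left key hε
        _ ≤ ε κ.1 * ((2 * ρ ^ degm κ.1) *
              ((degm κ.1 : ℝ) * (ρ ^ degm κ.1 / ρ) * ‖w y - w t‖)) := by
            refine mul_le_mul_of_nonneg_left ?_ hε
            refine mul_le_mul (by linarith) (hab.trans hmps) (abs_nonneg _) (by positivity)
        _ ≤ ε κ.1 * ((2 * ρ ^ degm κ.1) *
              ((degm κ.1 : ℝ) * (ρ ^ degm κ.1 / ρ) * ((M + 1) * |y - t|))) := by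
            refine mul_le_mul_of_nonneg_left (mul_le_mul_of_nonneg_left
              (mul_le_mul_of_nonneg_left h2 hnn) (by positivity)) hε
        _ = ε κ.1 * (2 * (M + 1) * (degm κ.1 : ℝ) * (ρ ^ (2 * degm κ.1) / ρ)) * |y - t| := by
            rw [show ρ ^ (2 * degm κ.1) = ρ ^ degm κ.1 * ρ ^ degm κ.1 by
              rw [two_mul, pow_add]]
            ring
end

section
/- Let (ε_k)_{k≥1} be positive reals, (c_k)_{k≥1} complex numbers, and (g_{jk})_{j,k≥1} complex numbers with g_{jk} = 0 whenever k > j and Re(g_{jj}) ≤ 0 for all j. Let (b_{jk})_{j,k≥1} be nonnegative reals with Σ_{k=1}^∞ b_{jk} ≤ 1 for every j. Assume Σ_j ε_j|c_j|² < ∞ and that the double family (ε_k·|c_j|·|c_k|·|g_{jk}|)_{j,k} is summable. Then 2 Σ_{j,k} ε_k Re(c_j·conj(c_k)·g_{jk}) ≤ 2 Σ_{j=1}^∞ b_{jj} ε_j |c_j|² Re(g_{jj}) + 2 Σ_{j=2}^∞ Σ_{k=1}^{j−1} ( b_{jk} ε_j |c_j|² Re(g_{jj}) + b_{kj} ε_k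 |c_k|² Re(g_{kk}) + ε_k Re(c_j·conj(c_k)·g_{jk}) ), all series on the right being absolutely convergent. -/
open scoped BigOperators ComplexConjugate

/-- Lemma 3.5 (core estimate): for an upper-triangular infinite matrix (g_{jk})
with nonpositive real diagonal, the double series 2Σ_{j,k} ε_k Re(c_j c̄_k g_{jk}) is
bounded by the weighted right-hand side, all series on the right being absolutely
convergent.  (Indices are 0-based: j,k ∈ ℕ, the inner sum ranges over k < j.) -/
theorem stmt7 (ε : ℕ → ℝ) (hεpos : ∀ k, 0 < ε k)
    (c : ℕ → ℂ) (g : ℕ → ℕ → ℂ)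
    (hgtri : ∀ j k, j < k → g j k = 0)
    (hgdiag : ∀ j, (g j j).re ≤ 0)
    (b : ℕ → ℕ → ℝ) (hbnonneg : ∀ j k, 0 ≤ b j k)
    (hbsum : ∀ j, Summable (b j) ∧ ∑' k, b j k ≤ 1)
    (hc : Summable fun j => ε j * ‖c j‖ ^ 2)
    (habs : Summable fun p : ℕ × ℕ =>
      ε p.2 * ‖c p.1‖ * ‖c p.2‖ * ‖g p.1 p.2‖) :
    Summable (fun j => b j j * ε j * ‖c j‖ ^ 2 * (g j j).re) ∧
    Summable (fun j => ∑ k ∈ Finset.range j,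
      (b j k * ε j * ‖c j‖ ^ 2 * (g j j).re
        + b k j * ε k * ‖c k‖ ^ 2 * (g k k).re
        + ε k * (c j * conj (c k) * g j k).re)) ∧
    2 * ∑' p : ℕ × ℕ, ε p.2 * (c p.1 * conj (c p.2) * g p.1 p.2).re ≤
      2 * ∑' j, b j j * ε j * ‖c j‖ ^ 2 * (g j j).re
      + 2 * ∑' j, ∑ k ∈ Finset.range j,
          (b j k * ε j * ‖c j‖ ^ 2 * (g j j).re
            + b k j * ε k * ‖c k‖ ^ 2 * (g k k).re
            + ε k * (c j * conj (c k) * g j k).re) := by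
  classical
  -- notation
  set A : ℕ × ℕ → ℝ := fun p => ε p.2 * ‖c p.1‖ * ‖c p.2‖
      * ‖g p.1 p.2‖ with hAdef
  set F : ℕ × ℕ → ℝ := fun p => ε p.2 * (c p.1 * conj (c p.2) * g p.1 p.2).re with hFdef
  have hA0 : ∀ p : ℕ × ℕ, 0 ≤ A p := fun p => by
    have := (hεpos p.2).le
    positivity
  have hFA : ∀ p : ℕ × ℕ, ‖F p‖ ≤ A p := by
    intro p
    have h1 : |(c p.1 * conj (c p.2) * g p.1 p.2).re|
        ≤ ‖c p.1‖ * ‖c p.2‖ * ‖g p.1 p.2‖ := by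
      calc |(c p.1 * conj (c p.2) * g p.1 p.2).re|
          ≤ ‖c p.1 * conj (c p.2) * g p.1 p.2‖ := Complex.abs_re_le_norm _
        _ = ‖c p.1‖ * ‖c p.2‖ * ‖g p.1 p.2‖ := by
            rw [norm_mul, norm_mul, Complex.norm_conj]
    calc ‖F p‖ = ε p.2 * |(c p.1 * conj (c p.2) * g p.1 p.2).re| := by
          rw [hFdef, Real.norm_eq_abs, abs_mul, abs_of_pos (hεpos p.2)]
      _ ≤ ε p.2 * (‖c p.1‖ * ‖c p.2‖ * ‖g p.1 p.2‖) :=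
          mul_le_mul_of_nonneg_left h1 (hεpos p.2).le
      _ = A p := by rw [hAdef]; ring
  have hF : Summable F := Summable.of_norm_bounded habs hFA
  -- diagonal
  have hdinj : Function.Injective (fun j : ℕ => ((j, j) : ℕ × ℕ)) := by
    intro a b h; simpa using congrArg Prod.fst h
  have hdabs : Summable (fun j => ε j * ‖c j‖ ^ 2 * ‖g j j‖) := by
    have := habs.comp_injective hdinj
    convert this using 2 with j
    · rfl
    simp only [hAdef, Function.comp]
    ring
  have hb1 : ∀ j k, b j k ≤ 1 := fun j k =>
    le_trans (Summable.le_tsum (hbsum j).1 k fun _ _ => hbnonneg j _) (hbsum j).2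
  have hbrange : ∀ j (s : Finset ℕ), ∑ k ∈ s, b j k ≤ 1 := fun j s =>
    le_trans (Summable.sum_le_tsum s (fun k _ => hbnonneg j k) (hbsum j).1) (hbsum j).2
  -- diagonal value of F
  have hFdiag : ∀ j, F (j, j) = ε j * ‖c j‖ ^ 2 * (g j j).re := by
    intro j
    have : (c j * conj (c j) * g j j).re = ‖c j‖ ^ 2 * (g j j).re := by
      rw [Complex.mul_conj, Complex.re_ofReal_mul, Complex.sq_norm]
    simp only [hFdef]; rw [this]; ring
  -- X j := ε j * |c j|^2 * Re(g j j), nonpositive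
  have hX0 : ∀ j, ε j * ‖c j‖ ^ 2 * (g j j).re ≤ 0 := by
    intro j
    have h1 : 0 ≤ ε j * ‖c j‖ ^ 2 := mul_nonneg (hεpos j).le (by positivity)
    exact mul_nonpos_of_nonneg_of_nonpos h1 (hgdiag j)
  have hXabs : ∀ j, ‖ε j * ‖c j‖ ^ 2 * (g j j).re‖
      ≤ ε j * ‖c j‖ ^ 2 * ‖g j j‖ := by
    intro j
    have h1 : 0 ≤ ε j * ‖c j‖ ^ 2 := mul_nonneg (hεpos j).le (by positivity)
    rw [Real.norm_eq_abs, abs_mul, abs_of_nonneg h1]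
    exact mul_le_mul_of_nonneg_left (Complex.abs_re_le_norm _) h1
  have hXsum : Summable (fun j => ε j * ‖c j‖ ^ 2 * (g j j).re) :=
    Summable.of_norm_bounded hdabs hXabs
  -- first summability claim: D j = b j j * X j
  have hD : Summable (fun j => b j j * ε j * ‖c j‖ ^ 2 * (g j j).re) := by
    apply Summable.of_norm_bounded hdabs
    intro j
    have : ‖b j j * ε j * ‖c j‖ ^ 2 * (g j j).re‖
        = b j j * ‖ε j * ‖c j‖ ^ 2 * (g j j).re‖ := by
      rw [Real.norm_eq_abs, Real.norm_eq_abs]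
      rw [show b j j * ε j * ‖c j‖ ^ 2 * (g j j).re
          = b j j * (ε j * ‖c j‖ ^ 2 * (g j j).re) from by ring,
        abs_mul, abs_of_nonneg (hbnonneg j j)]
    rw [this]
    calc b j j * ‖ε j * ‖c j‖ ^ 2 * (g j j).re‖
        ≤ 1 * (ε j * ‖c j‖ ^ 2 * ‖g j j‖) := by
          apply mul_le_mul (hb1 j j) (hXabs j) (norm_nonneg _) zero_le_one
      _ = ε j * ‖c j‖ ^ 2 * ‖g j j‖ := one_mul _
  -- P j
  have hPval : ∀ j, ∑ k ∈ Finset.range j, b j k * ε j * ‖c j‖ ^ 2 * (g j j).re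
      = (∑ k ∈ Finset.range j, b j k) * (ε j * ‖c j‖ ^ 2 * (g j j).re) := by
    intro j; rw [Finset.sum_mul]; exact Finset.sum_congr rfl fun k _ => by ring
  have hP : Summable (fun j => ∑ k ∈ Finset.range j,
      b j k * ε j * ‖c j‖ ^ 2 * (g j j).re) := by
    apply Summable.of_norm_bounded hdabs
    intro j
    rw [hPval j, Real.norm_eq_abs, abs_mul,
      abs_of_nonneg (Finset.sum_nonneg fun k _ => hbnonneg j k)]
    calc (∑ k ∈ Finset.range j, b j k) * |ε j * ‖c j‖ ^ 2 * (g j j).re|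
        ≤ 1 * (ε j * ‖c j‖ ^ 2 * ‖g j j‖) :=
          mul_le_mul (hbrange j _) (hXabs j) (abs_nonneg _) zero_le_one
      _ = _ := one_mul _
  -- pair families for the mixed b-term
  set f : ℕ × ℕ → ℝ := fun p => if p.1 < p.2 then
      b p.1 p.2 * (ε p.1 * ‖c p.1‖ ^ 2 * ‖g p.1 p.1‖) else 0 with hfdef
  have hf0 : ∀ p, 0 ≤ f p := by
    intro p
    simp only [hfdef]
    split_ifs with h
    · exact mul_nonneg (hbnonneg _ _) (mul_nonneg (mul_nonneg (hεpos _).le (by positivity))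
        (by positivity))
    · exact le_refl 0
  have hfib : ∀ k, Summable (fun j => f (k, j)) := by
    intro k
    apply Summable.of_nonneg_of_le (fun j => hf0 (k, j)) _
      (((hbsum k).1).mul_right (ε k * ‖c k‖ ^ 2 * ‖g k k‖))
    intro j
    simp only [hfdef]
    split_ifs with h
    · exact le_refl _
    · exact mul_nonneg (hbnonneg _ _) (mul_nonneg (mul_nonneg (hεpos _).le (by positivity))
        (by positivity))
  have hfrow_le : ∀ k, ∑' j, f (k, j) ≤ ε k * ‖c k‖ ^ 2 * ‖g k k‖ := by
    intro k
    have hMk : 0 ≤ ε k * ‖c k‖ ^ 2 * ‖g k k‖ :=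
      mul_nonneg (mul_nonneg (hεpos _).le (by positivity)) (by positivity)
    calc ∑' j, f (k, j)
        ≤ ∑' j, b k j * (ε k * ‖c k‖ ^ 2 * ‖g k k‖) := by
          apply Summable.tsum_le_tsum _ (hfib k)
            (((hbsum k).1).mul_right _)
          intro j
          simp only [hfdef]
          split_ifs with h
          · exact le_refl _
          · exact mul_nonneg (hbnonneg _ _) hMk
      _ = (∑' j, b k j) * (ε k * ‖c k‖ ^ 2 * ‖g k k‖) := tsum_mul_right
      _ ≤ 1 * (ε k * ‖c k‖ ^ 2 * ‖g k k‖) :=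
          mul_le_mul_of_nonneg_right (hbsum k).2 hMk
      _ = _ := one_mul _
  have hf : Summable f := by
    apply (summable_prod_of_nonneg (fun p => hf0 p)).mpr
    refine ⟨hfib, ?_⟩
    apply Summable.of_nonneg_of_le (fun k => tsum_nonneg (fun j => hf0 (k, j))) hfrow_le hdabs
  -- signed pair family
  set q : ℕ × ℕ → ℝ := fun p => if p.1 < p.2 then
      b p.1 p.2 * ε p.1 * ‖c p.1‖ ^ 2 * (g p.1 p.1).re else 0 with hqdef
  have hqf : ∀ p, ‖q p‖ ≤ f p := by
    intro p
    simp only [hqdef, hfdef]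
    split_ifs with h
    · rw [show b p.1 p.2 * ε p.1 * ‖c p.1‖ ^ 2 * (g p.1 p.1).re
        = b p.1 p.2 * (ε p.1 * ‖c p.1‖ ^ 2 * (g p.1 p.1).re) from by ring,
        Real.norm_eq_abs, abs_mul, abs_of_nonneg (hbnonneg _ _)]
      exact mul_le_mul_of_nonneg_left (hXabs p.1) (hbnonneg _ _)
    · simp
  have hq : Summable q := Summable.of_norm_bounded hf hqf
  have hqs : Summable (fun p : ℕ × ℕ => q p.swap) := hq.prod_symm
  have hfs : Summable (fun p : ℕ × ℕ => f p.swap) := hf.prod_symm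
  -- row values of the swapped family
  have hQrow : ∀ j, ∑' k, q (k, j)
      = ∑ k ∈ Finset.range j, b k j * ε k * ‖c k‖ ^ 2 * (g k k).re := by
    intro j
    rw [tsum_eq_sum (s := Finset.range j) (fun k hk => by
      simp only [hqdef]
      rw [if_neg]
      simpa using Finset.mem_range.not.mp hk)]
    refine Finset.sum_congr rfl fun k hk => ?_
    simp only [hqdef]
    rw [if_pos (Finset.mem_range.mp hk)]
  -- summability of the Q column sums
  have hfsrow : Summable (fun j => ∑' k, f (k, j)) :=
    ((summable_prod_of_nonneg (fun p : ℕ × ℕ => hf0 p.swap)).mp hfs).2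
  have hQ : Summable (fun j => ∑ k ∈ Finset.range j,
      b k j * ε k * ‖c k‖ ^ 2 * (g k k).re) := by
    apply Summable.of_norm_bounded hfsrow
    intro j
    calc ‖∑ k ∈ Finset.range j, b k j * ε k * ‖c k‖ ^ 2 * (g k k).re‖
        ≤ ∑ k ∈ Finset.range j, ‖b k j * ε k * ‖c k‖ ^ 2 * (g k k).re‖ :=
          norm_sum_le _ _
      _ ≤ ∑ k ∈ Finset.range j, f (k, j) := by
          refine Finset.sum_le_sum fun k hk => ?_
          have := hqf (k, j)
          simp only [hqdef] at this
          rwa [if_pos (Finset.mem_range.mp hk)] at this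
      _ ≤ ∑' k, f (k, j) := Summable.sum_le_tsum _ (fun k _ => hf0 (k, j)) (hfs.prod_factor j)
  -- summability of the off-diagonal F column sums
  have hArow : Summable (fun j => ∑' k, A (j, k)) :=
    ((summable_prod_of_nonneg hA0).mp habs).2
  have hR : Summable (fun j => ∑ k ∈ Finset.range j,
      ε k * (c j * conj (c k) * g j k).re) := by
    apply Summable.of_norm_bounded hArow
    intro j
    calc ‖∑ k ∈ Finset.range j, ε k * (c j * conj (c k) * g j k).re‖
        ≤ ∑ k ∈ Finset.range j, ‖ε k * (c j * conj (c k) * g j k).re‖ := norm_sum_le _ _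
      _ ≤ ∑ k ∈ Finset.range j, A (j, k) := Finset.sum_le_sum fun k _ => hFA (j, k)
      _ ≤ ∑' k, A (j, k) := Summable.sum_le_tsum _ (fun k _ => hA0 (j, k)) (habs.prod_factor j)
  -- second summability claim
  have hsum2 : Summable (fun j => ∑ k ∈ Finset.range j,
      (b j k * ε j * ‖c j‖ ^ 2 * (g j j).re
        + b k j * ε k * ‖c k‖ ^ 2 * (g k k).re
        + ε k * (c j * conj (c k) * g j k).re)) := by
    have heq : (fun j => ∑ k ∈ Finset.range j,
        (b j k * ε j * ‖c j‖ ^ 2 * (g j j).re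
          + b k j * ε k * ‖c k‖ ^ 2 * (g k k).re
          + ε k * (c j * conj (c k) * g j k).re))
        = fun j => (∑ k ∈ Finset.range j, b j k * ε j * ‖c j‖ ^ 2 * (g j j).re)
          + (∑ k ∈ Finset.range j, b k j * ε k * ‖c k‖ ^ 2 * (g k k).re)
          + (∑ k ∈ Finset.range j, ε k * (c j * conj (c k) * g j k).re) := by
      funext j
      rw [Finset.sum_add_distrib, Finset.sum_add_distrib]
    rw [heq]
    exact (hP.add hQ).add hR
  -- diagonal of F summable
  have hFd : Summable (fun j => F (j, j)) :=
    hXsum.congr fun j => (hFdiag j).symm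
  -- decompose the full double sum
  have hLHS : ∑' p : ℕ × ℕ, F p
      = (∑' j, F (j, j)) + ∑' j, ∑ k ∈ Finset.range j, ε k * (c j * conj (c k) * g j k).re := by
    calc ∑' p : ℕ × ℕ, F p = ∑' j, ∑' k, F (j, k) := Summable.tsum_prod' hF hF.prod_factor
      _ = ∑' j, (F (j, j) + ∑ k ∈ Finset.range j, ε k * (c j * conj (c k) * g j k).re) := by
          refine tsum_congr fun j => ?_
          rw [tsum_eq_sum (s := Finset.range (j + 1)) (fun k hk => by
            have hjk : j < k := by simpa using Finset.mem_range.not.mp hk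
            simp only [hFdef]
            rw [hgtri j k hjk]
            simp), Finset.sum_range_succ, add_comm]
      _ = _ := Summable.tsum_add hFd hR
  -- tail sums of b
  have hbt : ∀ j, Summable (fun k => if j < k then b j k else 0) := by
    intro j
    apply Summable.of_nonneg_of_le _ _ (hbsum j).1 <;> intro k <;> split_ifs
    all_goals first | exact hbnonneg j k | exact le_refl _ | exact hbnonneg j k
  have hbt2 : ∀ j, Summable (fun k => if j < k then 0 else b j k) := by
    intro j
    apply Summable.of_nonneg_of_le _ _ (hbsum j).1 <;> intro k <;> split_ifs
    all_goals first | exact hbnonneg j k | exact le_refl _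
  have hsplit : ∀ j, (∑ k ∈ Finset.range (j + 1), b j k)
      + (∑' k, if j < k then b j k else 0) = ∑' k, b j k := by
    intro j
    have h1 : ∑' k, b j k = (∑' k, if j < k then 0 else b j k)
        + (∑' k, if j < k then b j k else 0) := by
      rw [← Summable.tsum_add (hbt2 j) (hbt j)]
      refine tsum_congr fun k => ?_
      split_ifs <;> simp
    have h2 : (∑' k, if j < k then 0 else b j k) = ∑ k ∈ Finset.range (j + 1), b j k := by
      rw [tsum_eq_sum (s := Finset.range (j + 1)) (fun k hk => by
        rw [if_pos]
        simpa using Finset.mem_range.not.mp hk)]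
      refine Finset.sum_congr rfl fun k hk => ?_
      rw [if_neg]
      simpa using Nat.lt_succ_iff.mp (Finset.mem_range.mp hk)
    rw [h1, h2]
  have ht0 : ∀ j, 0 ≤ ∑' k, if j < k then b j k else 0 := fun j =>
    tsum_nonneg fun k => by split_ifs; exacts [hbnonneg j k, le_refl 0]
  have ht1 : ∀ j, (∑' k, if j < k then b j k else 0) ≤ 1 := by
    intro j
    refine le_trans ?_ (hbsum j).2
    refine Summable.tsum_le_tsum (fun k => ?_) (hbt j) (hbsum j).1
    split_ifs; exacts [le_refl _, hbnonneg j k]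
  -- summability of t j * X j
  have htX : Summable (fun j => (∑' k, if j < k then b j k else 0)
      * (ε j * ‖c j‖ ^ 2 * (g j j).re)) := by
    apply Summable.of_norm_bounded hdabs
    intro j
    rw [Real.norm_eq_abs, abs_mul, abs_of_nonneg (ht0 j)]
    calc (∑' k, if j < k then b j k else 0) * |ε j * ‖c j‖ ^ 2 * (g j j).re|
        ≤ 1 * (ε j * ‖c j‖ ^ 2 * ‖g j j‖) :=
          mul_le_mul (ht1 j) (hXabs j) (abs_nonneg _) zero_le_one
      _ = _ := one_mul _
  -- Fubini for the q family
  have hQtsum : (∑' j, ∑ k ∈ Finset.range j,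
        b k j * ε k * ‖c k‖ ^ 2 * (g k k).re)
      = ∑' j, (∑' k, if j < k then b j k else 0)
          * (ε j * ‖c j‖ ^ 2 * (g j j).re) := by
    have e := Equiv.prodComm ℕ ℕ
    calc (∑' j, ∑ k ∈ Finset.range j, b k j * ε k * ‖c k‖ ^ 2 * (g k k).re)
        = ∑' j, ∑' k, q (k, j) := tsum_congr fun j => (hQrow j).symm
      _ = ∑' p : ℕ × ℕ, q p.swap := (Summable.tsum_prod' hqs fun j => hqs.prod_factor j).symm
      _ = ∑' p : ℕ × ℕ, q p := (Equiv.prodComm ℕ ℕ).tsum_eq q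
      _ = ∑' k, ∑' j, q (k, j) := Summable.tsum_prod' hq hq.prod_factor
      _ = _ := by
          refine tsum_congr fun k => ?_
          calc (∑' j, q (k, j))
              = ∑' j, (if k < j then b k j else 0)
                  * (ε k * ‖c k‖ ^ 2 * (g k k).re) := by
                refine tsum_congr fun j => ?_
                simp only [hqdef]
                split_ifs <;> ring
            _ = _ := tsum_mul_right
  -- pointwise key inequality
  have hkey_pt : ∀ j, ε j * ‖c j‖ ^ 2 * (g j j).re
      ≤ b j j * ε j * ‖c j‖ ^ 2 * (g j j).re
        + (∑ k ∈ Finset.range j, b j k * ε j * ‖c j‖ ^ 2 * (g j j).re)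
        + (∑' k, if j < k then b j k else 0) * (ε j * ‖c j‖ ^ 2 * (g j j).re) := by
    intro j
    have hs1 : (∑ k ∈ Finset.range (j + 1), b j k)
        + (∑' k, if j < k then b j k else 0) ≤ 1 := (hsplit j) ▸ (hbsum j).2
    have hX := hX0 j
    have hrw : b j j * ε j * ‖c j‖ ^ 2 * (g j j).re
        + (∑ k ∈ Finset.range j, b j k * ε j * ‖c j‖ ^ 2 * (g j j).re)
        + (∑' k, if j < k then b j k else 0) * (ε j * ‖c j‖ ^ 2 * (g j j).re)
        = ((∑ k ∈ Finset.range (j + 1), b j k) + (∑' k, if j < k then b j k else 0))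
          * (ε j * ‖c j‖ ^ 2 * (g j j).re) := by
      rw [hPval j, Finset.sum_range_succ]
      ring
    rw [hrw]
    nlinarith [hX, hs1]
  have hcomb : Summable (fun j => b j j * ε j * ‖c j‖ ^ 2 * (g j j).re
      + (∑ k ∈ Finset.range j, b j k * ε j * ‖c j‖ ^ 2 * (g j j).re)
      + (∑' k, if j < k then b j k else 0) * (ε j * ‖c j‖ ^ 2 * (g j j).re)) :=
    (hD.add hP).add htX
  have hkey : (∑' j, ε j * ‖c j‖ ^ 2 * (g j j).re)
      ≤ (∑' j, b j j * ε j * ‖c j‖ ^ 2 * (g j j).re)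
        + (∑' j, ∑ k ∈ Finset.range j, b j k * ε j * ‖c j‖ ^ 2 * (g j j).re)
        + (∑' j, ∑ k ∈ Finset.range j, b k j * ε k * ‖c k‖ ^ 2 * (g k k).re) := by
    calc (∑' j, ε j * ‖c j‖ ^ 2 * (g j j).re)
        ≤ ∑' j, (b j j * ε j * ‖c j‖ ^ 2 * (g j j).re
          + (∑ k ∈ Finset.range j, b j k * ε j * ‖c j‖ ^ 2 * (g j j).re)
          + (∑' k, if j < k then b j k else 0) * (ε j * ‖c j‖ ^ 2 * (g j j).re)) :=
          Summable.tsum_le_tsum hkey_pt hXsum hcomb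
      _ = (∑' j, b j j * ε j * ‖c j‖ ^ 2 * (g j j).re)
          + (∑' j, ∑ k ∈ Finset.range j, b j k * ε j * ‖c j‖ ^ 2 * (g j j).re)
          + (∑' j, (∑' k, if j < k then b j k else 0)
              * (ε j * ‖c j‖ ^ 2 * (g j j).re)) := by
          rw [Summable.tsum_add (hD.add hP) htX, Summable.tsum_add hD hP]
      _ = _ := by rw [← hQtsum]
  -- finish
  refine ⟨hD, hsum2, ?_⟩
  have hsplit2 : (∑' j, ∑ k ∈ Finset.range j,
      (b j k * ε j * ‖c j‖ ^ 2 * (g j j).re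
        + b k j * ε k * ‖c k‖ ^ 2 * (g k k).re
        + ε k * (c j * conj (c k) * g j k).re))
      = (∑' j, ∑ k ∈ Finset.range j, b j k * ε j * ‖c j‖ ^ 2 * (g j j).re)
        + (∑' j, ∑ k ∈ Finset.range j, b k j * ε k * ‖c k‖ ^ 2 * (g k k).re)
        + (∑' j, ∑ k ∈ Finset.range j, ε k * (c j * conj (c k) * g j k).re) := by
    calc (∑' j, ∑ k ∈ Finset.range j,
        (b j k * ε j * ‖c j‖ ^ 2 * (g j j).re
          + b k j * ε k * ‖c k‖ ^ 2 * (g k k).re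
          + ε k * (c j * conj (c k) * g j k).re))
        = ∑' j, ((∑ k ∈ Finset.range j, b j k * ε j * ‖c j‖ ^ 2 * (g j j).re)
          + (∑ k ∈ Finset.range j, b k j * ε k * ‖c k‖ ^ 2 * (g k k).re)
          + (∑ k ∈ Finset.range j, ε k * (c j * conj (c k) * g j k).re)) := by
          refine tsum_congr fun j => ?_
          rw [Finset.sum_add_distrib, Finset.sum_add_distrib]
      _ = _ := by rw [Summable.tsum_add (hP.add hQ) hR, Summable.tsum_add hP hQ]
  have hXd : (∑' j, F (j, j)) = ∑' j, ε j * ‖c j‖ ^ 2 * (g j j).re :=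
    tsum_congr hFdiag
  rw [hLHS, hsplit2, hXd]
  linarith [hkey]
end

section
/- Suppose the set S = {(l,β) ∈ {1,…,n} × ℕⁿ : β ≠ e_l and a_{l,β} ≠ 0} is finite with cardinality K. Then for every multi-index ι with |ι| ≥ 1: (i) the set {κ : |κ| ≥ 1, κ ≠ ι, G(κ,ι) ≠ 0} has at most K elements, and (ii) the set {γ : γ ≠ ι, G(ι,γ) ≠ 0} has at most K elements. (Hence each row and each column of the Koopman matrix has at most K nonzero off-diagonal entries.) -/
open scoped BigOperators

/-- If the vector field has only K nonzero non-diagonal monomials, then every row and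
every column of the Koopman matrix has at most K nonzero off-diagonal entries. -/
theorem stmt12 {n : ℕ} (hn : 1 ≤ n)
    (a : Fin n → (Fin n → ℕ) → ℂ) (ha0 : ∀ l, a l 0 = 0)
    (K : ℕ)
    (hfin : {p : Fin n × (Fin n → ℕ) | p.2 ≠ Pi.single p.1 1 ∧ a p.1 p.2 ≠ 0}.Finite)
    (hcard : {p : Fin n × (Fin n → ℕ) | p.2 ≠ Pi.single p.1 1 ∧ a p.1 p.2 ≠ 0}.ncard = K)
    (ι : Fin n → ℕ) (hι : 1 ≤ degm ι) :
    ({κ : Fin n → ℕ | 1 ≤ degm κ ∧ κ ≠ ι ∧ koop a κ ι ≠ 0}.Finite ∧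
     {κ : Fin n → ℕ | 1 ≤ degm κ ∧ κ ≠ ι ∧ koop a κ ι ≠ 0}.ncard ≤ K) ∧
    ({γ : Fin n → ℕ | γ ≠ ι ∧ koop a ι γ ≠ 0}.Finite ∧
     {γ : Fin n → ℕ | γ ≠ ι ∧ koop a ι γ ≠ 0}.ncard ≤ K) := by

  classical
  set S := {p : Fin n × (Fin n → ℕ) | p.2 ≠ Pi.single p.1 1 ∧ a p.1 p.2 ≠ 0} with hS
  have key : ∀ (T : Set (Fin n → ℕ)) (f : (Fin n → ℕ) → Fin n × (Fin n → ℕ)),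
      Set.MapsTo f T S → Set.InjOn f T → T.Finite ∧ T.ncard ≤ K := by
    intro T f hm hi
    have himg : (f '' T).Finite := hfin.subset (Set.mapsTo_iff_image_subset.mp hm)
    have hT : T.Finite := Set.Finite.of_finite_image himg hi
    refine ⟨hT, ?_⟩
    calc T.ncard = (f '' T).ncard := (Set.ncard_image_of_injOn hi).symm
      _ ≤ S.ncard := Set.ncard_le_ncard (Set.mapsTo_iff_image_subset.mp hm) hfin
      _ = K := hcard
  constructor
  · -- column ι fixed (row set)
    set P := fun (κ : Fin n → ℕ) => ∃ l : Fin n,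
      κ ≤ ι + Pi.single l 1 ∧ (κ l : ℂ) * a l (ι + Pi.single l 1 - κ) ≠ 0 with hP
    have hex : ∀ κ : Fin n → ℕ, koop a κ ι ≠ 0 → P κ := by
      intro κ hk
      obtain ⟨l, -, hl⟩ := Finset.exists_ne_zero_of_sum_ne_zero hk
      by_cases hle : κ ≤ ι + Pi.single l 1
      · rw [if_pos hle] at hl
        exact ⟨l, hle, hl⟩
      · rw [if_neg hle] at hl; exact absurd rfl hl
    set f : (Fin n → ℕ) → Fin n × (Fin n → ℕ) := fun κ =>
      if h : P κ then (h.choose, ι + Pi.single h.choose 1 - κ) else (⟨0, hn⟩, 0) with hf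
    apply key _ f
    · rintro κ ⟨-, hne, hk⟩
      have h := hex κ hk
      obtain ⟨hle, hprod⟩ := h.choose_spec
      simp only [hf, dif_pos h]
      refine ⟨?_, (mul_ne_zero_iff.mp hprod).2⟩
      intro hβ
      apply hne
      have := tsub_add_cancel_of_le hle
      simp only at hβ
      rw [hβ] at this
      exact add_left_cancel (this.trans (add_comm ι _))
    · rintro κ₁ ⟨-, -, hk₁⟩ κ₂ ⟨-, -, hk₂⟩ heq
      have h₁ := hex κ₁ hk₁
      have h₂ := hex κ₂ hk₂
      simp only [hf, dif_pos h₁, dif_pos h₂, Prod.mk.injEq] at heq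
      obtain ⟨hl, hβ⟩ := heq
      rw [hl] at hβ
      have e₁ : (ι + Pi.single h₁.choose 1) - ((ι + Pi.single h₁.choose 1) - κ₁) = κ₁ :=
        tsub_tsub_cancel_of_le h₁.choose_spec.1
      have e₂ : (ι + Pi.single h₂.choose 1) - ((ι + Pi.single h₂.choose 1) - κ₂) = κ₂ :=
        tsub_tsub_cancel_of_le h₂.choose_spec.1
      rw [← e₁, ← e₂, hl, hβ]
  · -- row ι fixed (column set)
    set P := fun (γ : Fin n → ℕ) => ∃ l : Fin n,
      ι ≤ γ + Pi.single l 1 ∧ (ι l : ℂ) * a l (γ + Pi.single l 1 - ι) ≠ 0 with hP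
    have hex : ∀ γ : Fin n → ℕ, koop a ι γ ≠ 0 → P γ := by
      intro γ hk
      obtain ⟨l, -, hl⟩ := Finset.exists_ne_zero_of_sum_ne_zero hk
      by_cases hle : ι ≤ γ + Pi.single l 1
      · rw [if_pos hle] at hl
        exact ⟨l, hle, hl⟩
      · rw [if_neg hle] at hl; exact absurd rfl hl
    set f : (Fin n → ℕ) → Fin n × (Fin n → ℕ) := fun γ =>
      if h : P γ then (h.choose, γ + Pi.single h.choose 1 - ι) else (⟨0, hn⟩, 0) with hf
    apply key _ f
    · rintro γ ⟨hne, hk⟩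
      have h := hex γ hk
      obtain ⟨hle, hprod⟩ := h.choose_spec
      simp only [hf, dif_pos h]
      refine ⟨?_, (mul_ne_zero_iff.mp hprod).2⟩
      intro hβ
      apply hne
      have := tsub_add_cancel_of_le hle
      simp only at hβ
      rw [hβ] at this
      exact (add_left_cancel (this.trans (add_comm γ _))).symm
    · rintro γ₁ ⟨-, hk₁⟩ γ₂ ⟨-, hk₂⟩ heq
      have h₁ := hex γ₁ hk₁
      have h₂ := hex γ₂ hk₂
      simp only [hf, dif_pos h₁, dif_pos h₂, Prod.mk.injEq] at heq
      obtain ⟨hl, hβ⟩ := heq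
      have e₁ := tsub_add_cancel_of_le h₁.choose_spec.1
      have e₂ := tsub_add_cancel_of_le h₂.choose_spec.1
      rw [hβ, hl] at e₁
      have : γ₁ + Pi.single h₂.choose 1 = γ₂ + Pi.single h₂.choose 1 := e₁.symm.trans e₂
      exact add_right_cancel this
end

section
/- Let α, β, γ be real numbers and define the vector fields on ℝ²: F¹(x₁,x₂) = (−αx₁, −αx₂), F²(x₁,x₂) = (−βx₁ + γ(x₁² − x₂²), −βx₂ + 2γx₁x₂), and F³(x₁,x₂) = (αγ(x₁² − x₂²), 2αγx₁x₂). Then, with the Lie bracket of vector fields defined by [F,G](x) = JF(x)·G(x) − JG(x)·F(x) (JF the Jacobian matrix), the following identities hold at every point of ℝ²: [F¹,F²] = F³, [F¹,F³] = α·F³, and [F²,F³] = β·F³. Consequently span{F¹,F²,F³} is a Lie algebra whose derived algebra is span{F³} and whose second derived algebra is 0, i.e. it is solvable. -/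
/-- Lie bracket of vector fields on ℝ², [F,G](x) = JF(x)·G(x) − JG(x)·F(x). -/
noncomputable def vbracket (F G : ℝ × ℝ → ℝ × ℝ) : ℝ × ℝ → ℝ × ℝ :=
  fun x => fderiv ℝ F x (G x) - fderiv ℝ G x (F x)

/-- Template quadratic vector field. -/
noncomputable def tmpl (p q : ℝ) : ℝ × ℝ → ℝ × ℝ :=
  fun x => (p * x.1 + q * (x.1 ^ 2 - x.2 ^ 2), p * x.2 + 2 * q * x.1 * x.2)

lemma tmpl_hasFDeriv (p q : ℝ) (x : ℝ × ℝ) :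
    ∃ L : ℝ × ℝ →L[ℝ] ℝ × ℝ, HasFDerivAt (tmpl p q) L x ∧
      ∀ v, L v = (p * v.1 + 2 * q * (x.1 * v.1 - x.2 * v.2),
       p * v.2 + 2 * q * (x.2 * v.1 + x.1 * v.2)) := by
  have e : tmpl p q = fun x : ℝ × ℝ =>
      (p * x.1 + q * (x.1 * x.1 - x.2 * x.2), p * x.2 + 2 * q * x.1 * x.2) := by
    funext x; simp only [tmpl]; ring_nf
  have hf : HasFDerivAt (fun x : ℝ × ℝ => x.1) (ContinuousLinearMap.fst ℝ ℝ ℝ) x :=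
    hasFDerivAt_fst
  have hs : HasFDerivAt (fun x : ℝ × ℝ => x.2) (ContinuousLinearMap.snd ℝ ℝ ℝ) x :=
    hasFDerivAt_snd
  have h1 : HasFDerivAt (fun x : ℝ × ℝ => p * x.1 + q * (x.1 * x.1 - x.2 * x.2)) _ x :=
    (hf.const_mul p).add (((hf.mul hf).sub (hs.mul hs)).const_mul q)
  have h2' : HasFDerivAt (fun x : ℝ × ℝ => p * x.2 + 2 * q * x.1 * x.2) _ x :=
    (hs.const_mul p).add ((hf.const_mul (2*q)).mul hs)
  refine ⟨_, e ▸ (HasFDerivAt.prodMk h1 h2'), fun v => ?_⟩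
  simp [ContinuousLinearMap.smul_apply]
  constructor <;> ring

lemma tmpl_fderiv (p q : ℝ) (x v : ℝ × ℝ) :
    fderiv ℝ (tmpl p q) x v
    = (p * v.1 + 2 * q * (x.1 * v.1 - x.2 * v.2),
       p * v.2 + 2 * q * (x.2 * v.1 + x.1 * v.2)) := by
  obtain ⟨L, hL, hLv⟩ := tmpl_hasFDeriv p q x
  rw [hL.fderiv]; exact hLv v

lemma tmpl_bracket (p q p' q' : ℝ) (x : ℝ × ℝ) :
    vbracket (tmpl p q) (tmpl p' q') x
    = ((p' * q - p * q') * (x.1 ^ 2 - x.2 ^ 2), (p' * q - p * q') * (2 * x.1 * x.2)) := by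
  simp only [vbracket, tmpl_fderiv, tmpl, Prod.mk_sub_mk]
  exact Prod.ext (by ring) (by ring)

lemma tmpl_smul (c p q : ℝ) : c • tmpl p q = tmpl (c * p) (c * q) := by
  funext x
  simp only [tmpl, Pi.smul_apply, Prod.smul_mk, smul_eq_mul]
  exact Prod.ext (by ring) (by ring)

lemma tmpl_add (p q p' q' : ℝ) : tmpl p q + tmpl p' q' = tmpl (p + p') (q + q') := by
  funext x
  simp only [tmpl, Pi.add_apply, Prod.mk_add_mk]
  exact Prod.ext (by ring) (by ring)

/-- Example 3.1: the bracket identities [F¹,F²] = F³, [F¹,F³] = αF³, [F²,F³] = βF³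
hold, so span{F¹,F²,F³} is a solvable Lie algebra: its derived algebra is span{F³}
and its second derived algebra is 0. -/
theorem stmt13 (α β γ : ℝ)
    (F1 F2 F3 : ℝ × ℝ → ℝ × ℝ)
    (hF1 : F1 = fun x => (-α * x.1, -α * x.2))
    (hF2 : F2 = fun x => (-β * x.1 + γ * (x.1 ^ 2 - x.2 ^ 2), -β * x.2 + 2 * γ * x.1 * x.2))
    (hF3 : F3 = fun x => (α * γ * (x.1 ^ 2 - x.2 ^ 2), 2 * α * γ * x.1 * x.2)) :
    (∀ x, vbracket F1 F2 x = F3 x) ∧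
    (∀ x, vbracket F1 F3 x = α • F3 x) ∧
    (∀ x, vbracket F2 F3 x = β • F3 x) ∧
    -- the derived algebra of 𝔤 = span{F¹,F²,F³} is span{F³} …
    Submodule.span ℝ {H : ℝ × ℝ → ℝ × ℝ |
        ∃ G₁ ∈ Submodule.span ℝ ({F1, F2, F3} : Set (ℝ × ℝ → ℝ × ℝ)),
        ∃ G₂ ∈ Submodule.span ℝ ({F1, F2, F3} : Set (ℝ × ℝ → ℝ × ℝ)),
          H = vbracket G₁ G₂} =
      Submodule.span ℝ ({F3} : Set (ℝ × ℝ → ℝ × ℝ)) ∧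
    -- … and the second derived algebra is 0
    Submodule.span ℝ {H : ℝ × ℝ → ℝ × ℝ |
        ∃ G₁ ∈ Submodule.span ℝ ({F3} : Set (ℝ × ℝ → ℝ × ℝ)),
        ∃ G₂ ∈ Submodule.span ℝ ({F3} : Set (ℝ × ℝ → ℝ × ℝ)),
          H = vbracket G₁ G₂} = ⊥ := by
  have e1 : F1 = tmpl (-α) 0 := by
    funext x; simp only [hF1, tmpl]; exact Prod.ext (by ring) (by ring)
  have e2 : F2 = tmpl (-β) γ := by
    funext x; simp only [hF2, tmpl]
  have e3 : F3 = tmpl 0 (α * γ) := by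
    funext x; simp only [hF3, tmpl]; exact Prod.ext (by ring) (by ring)
  -- part 1
  have part1 : ∀ x, vbracket F1 F2 x = F3 x := by
    intro x
    rw [e1, e2, e3, tmpl_bracket]
    simp only [tmpl]
    exact Prod.ext (by ring) (by ring)
  have part2 : ∀ x, vbracket F1 F3 x = α • F3 x := by
    intro x
    rw [e1, e3, tmpl_bracket]
    simp only [tmpl, Prod.smul_mk, smul_eq_mul]
    exact Prod.ext (by ring) (by ring)
  have part3 : ∀ x, vbracket F2 F3 x = β • F3 x := by
    intro x
    rw [e2, e3, tmpl_bracket]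
    simp only [tmpl, Prod.smul_mk, smul_eq_mul]
    exact Prod.ext (by ring) (by ring)
  -- membership characterization
  have mem_char : ∀ G ∈ Submodule.span ℝ ({F1, F2, F3} : Set (ℝ × ℝ → ℝ × ℝ)),
      ∃ c1 c2 c3 : ℝ, G = tmpl (-(c1 * α) - c2 * β) (c2 * γ + c3 * (α * γ)) := by
    intro G hG
    rw [Submodule.mem_span_insert] at hG
    obtain ⟨c1, z, hz, rfl⟩ := hG
    rw [Submodule.mem_span_pair] at hz
    obtain ⟨c2, c3, rfl⟩ := hz
    refine ⟨c1, c2, c3, ?_⟩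
    rw [e1, e2, e3, tmpl_smul, tmpl_smul, tmpl_smul, tmpl_add, tmpl_add]
    congr 1 <;> ring
  refine ⟨part1, part2, part3, ?_, ?_⟩
  · -- derived algebra = span {F3}
    apply le_antisymm
    · rw [Submodule.span_le]
      rintro H ⟨G₁, hG₁, G₂, hG₂, rfl⟩
      obtain ⟨a1, a2, a3, rfl⟩ := mem_char G₁ hG₁
      obtain ⟨b1, b2, b3, rfl⟩ := mem_char G₂ hG₂
      rw [SetLike.mem_coe, Submodule.mem_span_singleton]
      refine ⟨a1 * b2 + a1 * b3 * α + a2 * b3 * β - a2 * b1 - a3 * b1 * α - a3 * b2 * β, ?_⟩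
      funext x
      rw [tmpl_bracket]
      simp only [hF3, Pi.smul_apply, Prod.smul_mk, smul_eq_mul]
      exact Prod.ext (by ring) (by ring)
    · rw [Submodule.span_le, Set.singleton_subset_iff]
      apply Submodule.subset_span
      exact ⟨F1, Submodule.subset_span (by simp), F2, Submodule.subset_span (by simp),
        (funext fun x => (part1 x).symm)⟩
  · -- second derived algebra = 0
    rw [Submodule.span_eq_bot]
    rintro H ⟨G₁, hG₁, G₂, hG₂, rfl⟩
    rw [Submodule.mem_span_singleton] at hG₁ hG₂
    obtain ⟨c1, rfl⟩ := hG₁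
    obtain ⟨c2, rfl⟩ := hG₂
    rw [e3, tmpl_smul, tmpl_smul]
    funext x
    rw [tmpl_bracket]
    simp only [Pi.zero_apply]
    rw [Prod.mk_eq_zero]
    constructor <;> ring
end

section
/- Let μ be a real number with μ ≥ 12/5. Then for every ρ with 0 < ρ ≤ 1 and all z₁, z₂ ∈ ℂ with |z₁| = ρ and |z₂| ≤ ρ, one has Re((−z₁ + (1/μ)·sin²(z₁)·z₁²·z₂)·conj(z₁)) < 0, where sin denotes the complex sine. (This shows that the bidisk D²(0,ρ) is forward invariant under the flow of the vector field F(z₁,z₂) = (−z₁ + (1/μ)sin²(z₁)z₁²z₂, −z₂); the same holds with cos in place of sin.) -/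
open ComplexConjugate

lemma sin_sq_abs_lt (z : ℂ) (hz : ‖z‖ ≤ 1) :
    (‖Complex.sin z‖)^2 < 12/5 := by
  have him : |z.im| ≤ 1 := le_trans (Complex.abs_im_le_norm z) hz
  have h1 : ‖Complex.sin z‖ ≤ Real.cosh 1 := by
    have hdef : Complex.sin z
        = (Complex.exp (-z * Complex.I) - Complex.exp (z * Complex.I)) * Complex.I / 2 := rfl
    rw [hdef]
    have : ‖(Complex.exp (-z * Complex.I) - Complex.exp (z * Complex.I)) * Complex.I / 2‖
        = ‖Complex.exp (-z * Complex.I) - Complex.exp (z * Complex.I)‖ / 2 := by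
      simp [map_div₀, map_mul]
    rw [this]
    have hb : ‖Complex.exp (-z * Complex.I) - Complex.exp (z * Complex.I)‖
        ≤ Real.exp z.im + Real.exp (-z.im) := by
      calc ‖Complex.exp (-z * Complex.I) - Complex.exp (z * Complex.I)‖
          ≤ ‖Complex.exp (-z * Complex.I)‖ + ‖Complex.exp (z * Complex.I)‖ :=
            norm_sub_le _ _
        _ = Real.exp z.im + Real.exp (-z.im) := by
            rw [Complex.norm_exp, Complex.norm_exp]
            simp [Complex.mul_re]
    have hcosh : (Real.exp z.im + Real.exp (-z.im)) / 2 = Real.cosh z.im := by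
      rw [Real.cosh_eq]
    have : Real.cosh z.im ≤ Real.cosh 1 := by
      rw [← Real.cosh_abs]
      exact Real.cosh_le_cosh.mpr (by rw [abs_abs, abs_one]; exact him)
    linarith
  have hc : Real.cosh 1 < 1.5432 := by
    rw [Real.cosh_eq]
    have h2 := Real.exp_one_lt_d9
    have h3 := Real.exp_one_gt_d9
    have h4 : Real.exp (-1) = (Real.exp 1)⁻¹ := by rw [Real.exp_neg]
    have h5 : (Real.exp 1)⁻¹ < 0.368 := by
      rw [inv_lt_comm₀ (by positivity) (by norm_num)]
      linarith
    rw [h4]; linarith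
  nlinarith [norm_nonneg (Complex.sin z)]

/-- Example 2: for μ ≥ 12/5, the first component of the vector field
F(z₁,z₂) = (−z₁ + (1/μ)sin²(z₁)z₁²z₂, −z₂) points inward on the boundary |z₁| = ρ of
every bidisk D²(0,ρ) with 0 < ρ ≤ 1. -/
theorem stmt18 (μ : ℝ) (hμ : 12 / 5 ≤ μ)
    (ρ : ℝ) (hρ0 : 0 < ρ) (hρ1 : ρ ≤ 1) :
    ∀ z₁ z₂ : ℂ, ‖z₁‖ = ρ → ‖z₂‖ ≤ ρ →
      ((-z₁ + (1 / (μ : ℂ)) * Complex.sin z₁ ^ 2 * z₁ ^ 2 * z₂) * conj z₁).re < 0 := by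
  intro z₁ z₂ h1 h2
  have hμ0 : (0:ℝ) < μ := by linarith
  have hs : (‖Complex.sin z₁‖)^2 < 12/5 :=
    sin_sq_abs_lt z₁ (by rw [h1]; exact hρ1)
  have hsplit : ((-z₁ + (1 / (μ : ℂ)) * Complex.sin z₁ ^ 2 * z₁ ^ 2 * z₂) * conj z₁)
      = -(z₁ * conj z₁) + (1 / (μ : ℂ)) * Complex.sin z₁ ^ 2 * z₁ ^ 2 * z₂ * conj z₁ := by
    ring
  rw [hsplit, Complex.add_re, Complex.neg_re, Complex.mul_conj]
  have hre : ((1 / (μ : ℂ)) * Complex.sin z₁ ^ 2 * z₁ ^ 2 * z₂ * conj z₁).re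
      ≤ (1/μ) * (‖Complex.sin z₁‖)^2 * ρ^2 * ‖z₂‖ * ρ := by
    calc ((1 / (μ : ℂ)) * Complex.sin z₁ ^ 2 * z₁ ^ 2 * z₂ * conj z₁).re
        ≤ ‖(1 / (μ : ℂ)) * Complex.sin z₁ ^ 2 * z₁ ^ 2 * z₂ * conj z₁‖ :=
          Complex.re_le_norm _
      _ = (1/μ) * (‖Complex.sin z₁‖)^2 * ρ^2 * ‖z₂‖ * ρ := by
          simp [map_mul, map_pow, map_div₀, Complex.norm_conj, h1,
            Complex.norm_real, abs_of_pos hμ0]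
  have hnsq : (Complex.normSq z₁ : ℝ) = ρ^2 := by
    rw [← Complex.sq_norm, h1]
  simp only [Complex.ofReal_re] at *
  rw [hnsq]
  have hz2 : 0 ≤ ‖z₂‖ := norm_nonneg _
  have hss : 0 ≤ (‖Complex.sin z₁‖)^2 := by positivity
  have key : (1/μ) * (‖Complex.sin z₁‖)^2 * ρ^2 * ‖z₂‖ * ρ < ρ^2 := by
    have h6 : (1/μ) * (‖Complex.sin z₁‖)^2 < 1 := by
      rw [div_mul_eq_mul_div, one_mul, div_lt_one hμ0]; linarith
    have h7 : ‖z₂‖ * ρ ≤ 1 := by nlinarith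
    have hsnn : 0 ≤ 1/μ * (‖Complex.sin z₁‖)^2 * ρ^2 := by positivity
    have h8 : 1/μ * (‖Complex.sin z₁‖)^2 * ρ^2 * ‖z₂‖ * ρ
        ≤ 1/μ * (‖Complex.sin z₁‖)^2 * ρ^2 := by nlinarith
    have h9 := mul_lt_mul_of_pos_right h6 (pow_pos hρ0 2)
    nlinarith
  linarith
end
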